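/- arXiv:math/0310121 — 7 statements merged into one kernel-verified Lean document; each statement's English description precedes it below -/
import Mathlib

section
/- Let P and Q be finite posets and let η : P → Q be an order-projection, i.e., an order-preserving map such that for all q ≤ r in Q there exist a ≤ b in P with η(a) = q and η(b) = r. Then the relation on the set of fibers {η⁻¹(q) : q ∈ Q}, defined by F₁ ≤ F₂ if there exist a ∈ F₁ and b ∈ F₂ with a ≤ b in P, is a partial order. -/
/-- The fiber relation induced by an order-projection is a partial order. -/
theorem fiber_poset_is_partial_order {P Q : Type*} [PartialOrder P] [PartialOrder Q]
    [Finite P] [Finite Q] (η : P → Q) (hmono : Monotone η)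
    (hproj : ∀ q r : Q, q ≤ r → ∃ a b : P, a ≤ b ∧ η a = q ∧ η b = r) :
    IsPartialOrder {s : Set P // ∃ q : Q, s = η ⁻¹' {q}}
      (fun F₁ F₂ => ∃ a ∈ F₁.val, ∃ b ∈ F₂.val, a ≤ b) := by
  -- key: the relation between fibers of q and r is equivalent to q ≤ r
  have key : ∀ (F : {s : Set P // ∃ q : Q, s = η ⁻¹' {q}}) (q : Q),
      F.val = η ⁻¹' {q} → ∀ (G : {s : Set P // ∃ q : Q, s = η ⁻¹' {q}}) (r : Q),
      G.val = η ⁻¹' {r} →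
      ((∃ a ∈ F.val, ∃ b ∈ G.val, a ≤ b) ↔ q ≤ r) := by
    intro F q hF G r hG
    constructor
    · rintro ⟨a, ha, b, hb, hab⟩
      rw [hF] at ha; rw [hG] at hb
      simp only [Set.mem_preimage, Set.mem_singleton_iff] at ha hb
      rw [← ha, ← hb]; exact hmono hab
    · intro hqr
      obtain ⟨a, b, hab, ha, hb⟩ := hproj q r hqr
      exact ⟨a, by simp [hF, ha], b, by simp [hG, hb], hab⟩
  refine { refl := ?_, trans := ?_, antisymm := ?_ }
  · intro F
    obtain ⟨q, hq⟩ := F.2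
    exact (key F q hq F q hq).mpr le_rfl
  · intro F G H h1 h2
    obtain ⟨q, hq⟩ := F.2
    obtain ⟨r, hr⟩ := G.2
    obtain ⟨s, hs⟩ := H.2
    exact (key F q hq H s hs).mpr
      (le_trans ((key F q hq G r hr).mp h1) ((key G r hr H s hs).mp h2))
  · intro F G h1 h2
    obtain ⟨q, hq⟩ := F.2
    obtain ⟨r, hr⟩ := G.2
    have : q = r := le_antisymm ((key F q hq G r hr).mp h1) ((key G r hr F q hq).mp h2)
    exact Subtype.ext (by rw [hq, hr, this])
end

section
/- Let P be a finite poset and let (x,y,z) be a zipper in P. Then the set P' = (P − {x,y,z}) ∪ {xy}, where xy is a new element, equipped with the relation: a ⪯ b if a ≤ b in P; xy ⪯ a if x ≤ a or y ≤ a; a ⪯ xy if a ≤ x; and xy ⪯ xy, is a partial order. -/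
/-- The underlying set of the zipped poset `P' = (P − {x,y,z}) ∪ {xy}`:
elements of `P` other than `x`, `y`, `z`, together with one new element `xy`
(represented by `Sum.inr ()`). -/
def ZipCarrier (α : Type*) (x y z : α) : Type _ :=
  {p : α // p ≠ x ∧ p ≠ y ∧ p ≠ z} ⊕ Unit

/-- The order relation `⪯` on the zipped poset: `a ⪯ b` if `a ≤ b` in `P`;
`xy ⪯ a` if `x ≤ a` or `y ≤ a`; `a ⪯ xy` if `a ≤ x`; and `xy ⪯ xy`. -/
def zipLE {α : Type*} [PartialOrder α] (x y z : α) :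
    ZipCarrier α x y z → ZipCarrier α x y z → Prop
  | .inl a, .inl b => a.val ≤ b.val
  | .inr _, .inl b => x ≤ b.val ∨ y ≤ b.val
  | .inl a, .inr _ => a.val ≤ x
  | .inr _, .inr _ => True

/-- `(x,y,z)` is a zipper in `P`: `z` covers `x` and `y` and covers no other element,
`z = x ∨ y` (the join), and the sets of elements strictly below `x` and `y` agree. -/
def IsZipper {α : Type*} [PartialOrder α] (x y z : α) : Prop :=
  x ≠ y ∧ x ≠ z ∧ y ≠ z ∧
  (x ⋖ z) ∧ (y ⋖ z) ∧ (∀ w : α, w ⋖ z → w = x ∨ w = y) ∧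
  IsLUB {x, y} z ∧
  (∀ a : α, a < x ↔ a < y)

/-- for a zipper `(x,y,z)` in a finite poset `P`, the relation `⪯` on
`P' = (P − {x,y,z}) ∪ {xy}` is a partial order. -/
theorem zipped_is_partial_order {α : Type*} [PartialOrder α] [Finite α]
    (x y z : α) (hzip : IsZipper x y z) :
    IsPartialOrder (ZipCarrier α x y z) (zipLE x y z) := by
  obtain ⟨hxy, hxz, hyz, hxcz, hycz, hcov, hlub, hbelow⟩ := hzip
  refine { refl := ?_, trans := ?_, antisymm := ?_ }
  · intro a
    cases a with
    | inl a => exact le_refl a.val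
    | inr u => trivial
  · intro a b c hab hbc
    cases a with
    | inl a =>
      cases b with
      | inl b =>
        cases c with
        | inl c => exact le_trans hab hbc
        | inr u => exact le_trans hab hbc
      | inr u =>
        cases c with
        | inl c =>
          -- hab : a.val ≤ x, hbc : x ≤ c ∨ y ≤ c
          rcases hbc with h | h
          · exact le_trans hab h
          · have hax : a.val < x := lt_of_le_of_ne hab a.2.1
            exact le_trans ((hbelow a.val).mp hax).le h
        | inr u => exact hab
    | inr u =>
      cases b with
      | inl b =>
        cases c with
        | inl c =>
          rcases hab with h | h
          · exact Or.inl (le_trans h hbc)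
          · exact Or.inr (le_trans h hbc)
        | inr u => trivial
      | inr v =>
        cases c with
        | inl c => exact hbc
        | inr u => trivial
  · intro a b hab hba
    cases a with
    | inl a =>
      cases b with
      | inl b =>
        have : a.val = b.val := le_antisymm hab hba
        exact congrArg Sum.inl (Subtype.ext this)
      | inr u =>
        -- hab : a.val ≤ x, hba : x ≤ a.val ∨ y ≤ a.val
        exfalso
        rcases hba with h | h
        · exact a.2.1 (le_antisymm hab h)
        · have hyx : y ≤ x := le_trans h hab
          have : y < x := lt_of_le_of_ne hyx (Ne.symm hxy)
          exact lt_irrefl y ((hbelow y).mp this)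
    | inr u =>
      cases b with
      | inl b =>
        exfalso
        rcases hab with h | h
        · exact b.2.1 (le_antisymm hba h)
        · have hyx : y ≤ x := le_trans h hba
          have : y < x := lt_of_le_of_ne hyx (Ne.symm hxy)
          exact lt_irrefl y ((hbelow y).mp this)
      | inr v => rfl
end

section
/- Let P be a finite poset with a zipper (x,y,z) and let P' be the zipped poset with new element xy. If a ⪯ xy in P', then the Möbius function satisfies μ_{P'}(a, xy) = μ_P(a, x) = μ_P(a, y). Moreover, if a ⪯ b in P' with a ≠ xy, then μ_{P'}(a,b) = μ_P(a,b) (where elements other than xy are identified with their counterparts in P, and intervals containing xy are interpreted via the zipping). -/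
open scoped Classical in
/-- `μ` is the Möbius function of the relation `r`:
`∑_{c : r a c ∧ r c b} μ(a,c) = δ_{a,b}` for all `a ≤ b`. -/
noncomputable def IsMoebius {α : Type*} (r : α → α → Prop) (μ : α → α → ℤ) : Prop :=
  ∀ a b : α, r a b →
    (∑ᶠ c ∈ {c : α | r a c ∧ r c b}, μ a c) = if a = b then 1 else 0

open Finset
open scoped Classical

section Moebius

variable {β : Type*} [Fintype β] {r : β → β → Prop} {μ : β → β → ℤ}

theorem IsMoebius.sum_eq (hμ : IsMoebius r μ) {a b : β} (hab : r a b) :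
    ∑ c with r a c ∧ r c b, μ a c = if a = b then 1 else 0 := by
  rw [← hμ a b hab, ← finsum_mem_coe_finset, coe_filter]
  simp

theorem IsMoebius.apply_eq_of_sum_eq {γ : Type*} [Preorder γ] [WellFoundedLT γ] (ρ : β → γ)
    (hr : ∀ b, r b b) (hρ : ∀ c b, r c b → c ≠ b → ρ c < ρ b) (hμ : IsMoebius r μ) {a : β}
    {ν : β → ℤ} (hν : ∀ b, r a b → ∑ c with r a c ∧ r c b, ν c = if a = b then 1 else 0)
    {b : β} (hab : r a b) : μ a b = ν b := by
  induction b using (InvImage.wf ρ wellFounded_lt).induction with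
  | _ b ih =>
  have hb : b ∈ ({c | r a c ∧ r c b} : Finset β) := by simp [hab, hr b]
  have hsum := (hμ.sum_eq hab).trans (hν b hab).symm
  rw [← add_sum_erase _ _ hb, ← add_sum_erase _ _ hb] at hsum
  have hrest : ∑ c ∈ ({c | r a c ∧ r c b} : Finset β).erase b, μ a c =
      ∑ c ∈ ({c | r a c ∧ r c b} : Finset β).erase b, ν c := by
    refine sum_congr rfl fun c hc => ?_
    obtain ⟨hcb, hc⟩ := mem_erase.mp hc
    obtain ⟨hac, hcb'⟩ := (mem_filter.mp hc).2
    exact ih c (hρ c b hcb' hcb) hac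
  linarith

end Moebius

section PosetMoebius

variable {α : Type*} [PartialOrder α] [Fintype α] {μ : α → α → ℤ}

theorem IsMoebius.sum_Ico_eq_neg (hμ : IsMoebius (· ≤ · : α → α → Prop) μ) {a b : α}
    (hab : a < b) : ∑ c with a ≤ c ∧ c < b, μ a c = -μ a b := by
  have hsum := hμ.sum_eq hab.le
  have hb : b ∈ ({c | a ≤ c ∧ c ≤ b} : Finset α) := by simp [hab.le]
  rw [if_neg hab.ne, ← add_sum_erase _ _ hb] at hsum
  have hIco : ({c | a ≤ c ∧ c ≤ b} : Finset α).erase b = ({c | a ≤ c ∧ c < b} : Finset α) := by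
    ext c
    simp only [mem_erase, mem_filter, mem_univ, true_and, lt_iff_le_and_ne]
    tauto
  rw [hIco] at hsum
  linarith

theorem IsMoebius.apply_eq_of_lt_iff_lt (hμ : IsMoebius (· ≤ · : α → α → Prop) μ) {x y : α}
    (hxy : ∀ c, c < x ↔ c < y) {a : α} (ha : a < x) : μ a x = μ a y := by
  rw [← neg_neg (μ a x), ← neg_neg (μ a y), ← hμ.sum_Ico_eq_neg ha,
    ← hμ.sum_Ico_eq_neg ((hxy a).mp ha)]
  simp only [hxy]

end PosetMoebius

namespace IsZipper

variable {α : Type*} [PartialOrder α] {x y z : α}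

theorem lt_left_iff_lt_right (h : IsZipper x y z) (a : α) : a < x ↔ a < y := h.2.2.2.2.2.2.2 a

theorem not_left_le_right (h : IsZipper x y z) : ¬x ≤ y := fun hle =>
  lt_irrefl x ((h.lt_left_iff_lt_right x).mpr (hle.lt_of_ne h.1))

theorem left_lt_top (h : IsZipper x y z) : x < z := h.2.2.2.1.lt

theorem right_lt_top (h : IsZipper x y z) : y < z := h.2.2.2.2.1.lt

theorem top_le (h : IsZipper x y z) {b : α} (hx : x ≤ b) (hy : y ≤ b) : z ≤ b :=
  h.2.2.2.2.2.2.1.2 (by rintro w (rfl | rfl) <;> assumption)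

theorem le_left_iff_le_right (h : IsZipper x y z) {a : α} (hx : a ≠ x) (hy : a ≠ y) :
    a ≤ x ↔ a ≤ y := by
  rw [le_iff_lt_or_eq, le_iff_lt_or_eq, h.lt_left_iff_lt_right]
  simp [hx, hy]

theorem le_left_or_le_right_of_lt [Finite α] (h : IsZipper x y z) {c : α} (hc : c < z) :
    c ≤ x ∨ c ≤ y := by
  have : IsStronglyCoatomic α := .of_wellFounded_gt wellFounded_gt
  obtain ⟨w, hcw, hwz⟩ := exists_le_covBy_of_lt hc
  rcases h.2.2.2.2.2.1 w hwz with rfl | rfl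
  exacts [.inl hcw, .inr hcw]

theorem le_left_of_le_of_mem [Finite α] (h : IsZipper x y z) {a d : α}
    (ha : a ≠ x ∧ a ≠ y ∧ a ≠ z) (had : a ≤ d) (hd : d = x ∨ d = y ∨ d = z) : a ≤ x := by
  obtain ⟨hx, hy, hz⟩ := ha
  rcases hd with rfl | rfl | rfl
  · exact had
  · exact (h.le_left_iff_le_right hx hy).mpr had
  · exact (h.le_left_or_le_right_of_lt (had.lt_of_ne hz)).elim id
      (h.le_left_iff_le_right hx hy).mpr

section Moebius

variable [Fintype α] {μ : α → α → ℤ}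

/-- `[a, z)` is the union of `[a, x]` and `[a, y]`, which meet in `[a, x)`. -/
theorem moebius_top_eq_neg (h : IsZipper x y z) (hμ : IsMoebius (· ≤ · : α → α → Prop) μ)
    {a : α} (ha : a < x) : μ a z = -μ a x := by
  have hunion : ({c | a ≤ c ∧ c < z} : Finset α) =
      ({c | a ≤ c ∧ c ≤ x} : Finset α) ∪ ({c | a ≤ c ∧ c ≤ y} : Finset α) := by
    ext c
    simp only [mem_union, mem_filter, mem_univ, true_and]
    rw [← and_or_left]
    exact and_congr_right fun _ => ⟨h.le_left_or_le_right_of_lt,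
      fun hc => hc.elim (·.trans_lt h.left_lt_top) (·.trans_lt h.right_lt_top)⟩
  have hinter : ({c | a ≤ c ∧ c ≤ x} : Finset α) ∩ ({c | a ≤ c ∧ c ≤ y} : Finset α) =
      ({c | a ≤ c ∧ c < x} : Finset α) := by
    ext c
    simp only [mem_inter, mem_filter, mem_univ, true_and]
    constructor
    · rintro ⟨⟨hac, hcx⟩, -, hcy⟩
      refine ⟨hac, hcx.lt_of_ne ?_⟩
      rintro rfl
      exact h.not_left_le_right hcy
    · rintro ⟨hac, hcx⟩
      exact ⟨⟨hac, hcx.le⟩, hac, ((h.lt_left_iff_lt_right c).mp hcx).le⟩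
  have hay := (h.lt_left_iff_lt_right a).mp ha
  have key := sum_union_inter (s₁ := ({c | a ≤ c ∧ c ≤ x} : Finset α))
    (s₂ := ({c | a ≤ c ∧ c ≤ y} : Finset α)) (f := μ a)
  rw [← hunion, hinter, hμ.sum_Ico_eq_neg (ha.trans h.left_lt_top), hμ.sum_Ico_eq_neg ha,
    hμ.sum_eq ha.le, hμ.sum_eq hay.le, if_neg ha.ne, if_neg hay.ne] at key
  linarith

theorem sum_moebius_eq (h : IsZipper x y z) (hμ : IsMoebius (· ≤ · : α → α → Prop) μ)
    {a b : α} (ha : a < x) (hb : x ≤ b ∨ y ≤ b) :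
    ∑ d ∈ {x, y, z} with d ≤ b, μ a d = μ a x := by
  have hy := hμ.apply_eq_of_lt_iff_lt h.lt_left_iff_lt_right ha
  have hz := h.moebius_top_eq_neg hμ ha
  rw [sum_filter, sum_insert (by simp [h.1, h.2.1]), sum_insert (by simp [h.2.2.1]),
    sum_singleton]
  by_cases hxb : x ≤ b <;> by_cases hyb : y ≤ b
  · simp only [hxb, hyb, h.top_le hxb hyb, if_true]
    linarith
  · have hzb : ¬z ≤ b := fun hzb => hyb (h.right_lt_top.le.trans hzb)
    simp [hxb, hyb, hzb]
  · have hzb : ¬z ≤ b := fun hzb => hxb (h.left_lt_top.le.trans hzb)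
    simp [hxb, hyb, hzb, hy]
  · simp_all

end Moebius

end IsZipper

theorem card_filter_lt_strictMono {α : Type*} [PartialOrder α] [Fintype α] :
    StrictMono fun b : α => #({d | d < b} : Finset α) := fun c b hcb =>
  card_lt_card ⟨fun d => by simpa using (·.trans hcb),
    fun hsub => by simpa using @hsub c (by simpa using hcb)⟩

namespace ZipCarrier

variable {α : Type*} {x y z : α}

noncomputable instance [Fintype α] : Fintype (ZipCarrier α x y z) :=
  inferInstanceAs (Fintype (_ ⊕ Unit))

noncomputable def collapse (x y z : α) (c : α) : ZipCarrier α x y z :=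
  if h : c ≠ x ∧ c ≠ y ∧ c ≠ z then .inl ⟨c, h⟩ else .inr ()

def rep : ZipCarrier α x y z → α
  | .inl c => c.val
  | .inr _ => x

theorem collapse_of_ne {c : α} (hc : c ≠ x ∧ c ≠ y ∧ c ≠ z) :
    collapse x y z c = .inl ⟨c, hc⟩ :=
  dif_pos hc

theorem collapse_of_not_ne {c : α} (hc : ¬(c ≠ x ∧ c ≠ y ∧ c ≠ z)) :
    collapse x y z c = .inr () :=
  dif_neg hc

theorem collapse_eq_inl_iff {c : α} {d : {p : α // p ≠ x ∧ p ≠ y ∧ p ≠ z}} :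
    collapse x y z c = .inl d ↔ c = d.val := by
  by_cases hc : c ≠ x ∧ c ≠ y ∧ c ≠ z
  · rw [collapse_of_ne hc]
    exact ⟨fun h => congrArg Subtype.val (Sum.inl.inj h), fun h => congrArg Sum.inl (Subtype.ext h)⟩
  · rw [collapse_of_not_ne hc]
    exact ⟨fun h => absurd h Sum.inr_ne_inl, by rintro rfl; exact absurd d.2 hc⟩

theorem collapse_eq_inr_iff {c : α} : collapse x y z c = .inr () ↔ c = x ∨ c = y ∨ c = z := by
  by_cases hc : c ≠ x ∧ c ≠ y ∧ c ≠ z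
  · rw [collapse_of_ne hc]
    exact ⟨fun h => absurd h Sum.inl_ne_inr, by tauto⟩
  · rw [collapse_of_not_ne hc]
    exact ⟨fun _ => by tauto, fun _ => rfl⟩

theorem inl_eq_iff_val_eq_rep {a : {p : α // p ≠ x ∧ p ≠ y ∧ p ≠ z}} {b : ZipCarrier α x y z} :
    .inl a = b ↔ a.val = rep b :=
  ⟨congrArg rep, fun hab => by
    rcases b with b | ⟨⟩
    exacts [congrArg Sum.inl (Subtype.ext hab), absurd hab a.2.1]⟩

section Order

variable [PartialOrder α]

theorem zipLE_refl (c : ZipCarrier α x y z) : zipLE x y z c c := by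
  rcases c with c | ⟨⟩ <;> simp [zipLE]

theorem zipLE_inl_iff_le_rep {a : {p : α // p ≠ x ∧ p ≠ y ∧ p ≠ z}} {b : ZipCarrier α x y z} :
    zipLE x y z (.inl a) b ↔ a.val ≤ rep b := by
  rcases b with b | ⟨⟩ <;> rfl

variable [Fintype α]

theorem card_lt_card_of_zipLE (h : IsZipper x y z) {c b : ZipCarrier α x y z}
    (hcb : zipLE x y z c b) (hne : c ≠ b) :
    #({d | d < rep c} : Finset α) < #({d | d < rep b} : Finset α) := by
  rcases c with c | ⟨⟩ <;> rcases b with b | ⟨⟩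
  · exact card_filter_lt_strictMono
      (lt_of_le_of_ne hcb fun e => hne (congrArg Sum.inl (Subtype.ext e)))
  · exact card_filter_lt_strictMono (lt_of_le_of_ne hcb c.2.1)
  · rcases hcb with hxb | hyb
    · exact card_filter_lt_strictMono (lt_of_le_of_ne hxb b.2.1.symm)
    · have hxy : ({d | d < x} : Finset α) = ({d | d < y} : Finset α) :=
        filter_congr fun d _ => h.lt_left_iff_lt_right d
      show #({d | d < x} : Finset α) < _
      rw [hxy]
      exact card_filter_lt_strictMono (lt_of_le_of_ne hyb b.2.2.1.symm)
  · exact absurd rfl hne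

theorem filter_zipLE_eq_image (h : IsZipper x y z) (a : {p : α // p ≠ x ∧ p ≠ y ∧ p ≠ z})
    (b : ZipCarrier α x y z) :
    ({c | zipLE x y z (.inl a) c ∧ zipLE x y z c b} : Finset (ZipCarrier α x y z)) =
      ({c | a.val ≤ c ∧ c ≤ rep b} : Finset α).image (collapse x y z) := by
  ext c
  simp only [mem_filter, mem_univ, true_and, mem_image]
  rcases c with c | ⟨⟩
  · simp only [collapse_eq_inl_iff, exists_eq_right]
    exact and_congr Iff.rfl zipLE_inl_iff_le_rep
  · constructor
    · rintro ⟨hax, hxb⟩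
      rcases b with b | ⟨⟩
      · rcases hxb with hxb | hyb
        · exact ⟨x, ⟨hax, hxb⟩, collapse_eq_inr_iff.mpr (.inl rfl)⟩
        · exact ⟨y, ⟨(h.le_left_iff_le_right a.2.1 a.2.2.1).mp hax, hyb⟩,
            collapse_eq_inr_iff.mpr (.inr (.inl rfl))⟩
      · exact ⟨x, ⟨hax, le_rfl⟩, collapse_eq_inr_iff.mpr (.inl rfl)⟩
    · rintro ⟨d, ⟨had, hdb⟩, hd⟩
      replace hd := collapse_eq_inr_iff.mp hd
      refine ⟨h.le_left_of_le_of_mem a.2 had hd, ?_⟩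
      rcases b with b | ⟨⟩
      · rcases hd with rfl | rfl | rfl
        exacts [.inl hdb, .inr hdb, .inl (h.left_lt_top.le.trans hdb)]
      · trivial

theorem moebius_rep_collapse (h : IsZipper x y z) {μ : α → α → ℤ}
    (hμ : IsMoebius (· ≤ · : α → α → Prop) μ) (a : {p : α // p ≠ x ∧ p ≠ y ∧ p ≠ z}) {b c : α}
    (hcmem : c ∈ ({c | a.val ≤ c ∧ c ≤ b} : Finset α)) :
    μ a (rep (collapse x y z c)) =
      ∑ d ∈ ({c | a.val ≤ c ∧ c ≤ b} : Finset α) with collapse x y z d = collapse x y z c,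
        μ a d := by
  obtain ⟨hac, hcb⟩ := (mem_filter.mp hcmem).2
  by_cases hc : c ≠ x ∧ c ≠ y ∧ c ≠ z
  · simp only [collapse_of_ne hc, collapse_eq_inl_iff]
    rw [sum_filter, sum_ite_eq', if_pos hcmem]
    rfl
  · have hc : c = x ∨ c = y ∨ c = z := by tauto
    have hax := (h.le_left_of_le_of_mem a.2 hac hc).lt_of_ne a.2.1
    have hb : x ≤ b ∨ y ≤ b := by
      rcases hc with rfl | rfl | rfl
      exacts [.inl hcb, .inr hcb, .inl (h.left_lt_top.le.trans hcb)]
    simp only [collapse_of_not_ne (by tauto : ¬(c ≠ x ∧ c ≠ y ∧ c ≠ z)), collapse_eq_inr_iff]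
    show μ a x = _
    rw [← h.sum_moebius_eq hμ hax hb]
    refine sum_congr ?_ fun _ _ => rfl
    ext d
    simp only [mem_filter, mem_univ, true_and, mem_insert, mem_singleton]
    constructor
    · rintro ⟨hd, hdb⟩
      refine ⟨⟨?_, hdb⟩, hd⟩
      rcases hd with rfl | rfl | rfl
      exacts [hax.le, ((h.lt_left_iff_lt_right a).mp hax).le, hax.le.trans h.left_lt_top.le]
    · rintro ⟨⟨-, hdb⟩, hd⟩
      exact ⟨hd, hdb⟩

theorem moebius_inl_eq_moebius_rep (h : IsZipper x y z) {μP : α → α → ℤ}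
    (hμP : IsMoebius (· ≤ · : α → α → Prop) μP) {μ' : ZipCarrier α x y z → ZipCarrier α x y z → ℤ}
    (hμ' : IsMoebius (zipLE x y z) μ') (a : {p : α // p ≠ x ∧ p ≠ y ∧ p ≠ z})
    {b : ZipCarrier α x y z} (hab : zipLE x y z (.inl a) b) : μ' (.inl a) b = μP a (rep b) := by
  refine hμ'.apply_eq_of_sum_eq (fun c => #({d | d < rep c} : Finset α)) zipLE_refl
    (fun c b => card_lt_card_of_zipLE h) (ν := fun c => μP a (rep c)) (fun b hab => ?_) hab
  rw [filter_zipLE_eq_image h a b, sum_image' _ fun c => moebius_rep_collapse h hμP a,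
    hμP.sum_eq (zipLE_inl_iff_le_rep.mp hab)]
  simp only [inl_eq_iff_val_eq_rep]

end Order

end ZipCarrier

/-- for a zipper `(x,y,z)` in a finite poset `P` with zipped poset `P'`:
if `a ⪯ xy` then `μ_{P'}(a,xy) = μ_P(a,x) = μ_P(a,y)`; and if `a ⪯ b` with
`a, b ≠ xy` then `μ_{P'}(a,b) = μ_P(a,b)`. -/
theorem zipped_moebius_below {α : Type*} [PartialOrder α] [Finite α]
    (x y z : α) (hzip : IsZipper x y z)
    (μP : α → α → ℤ) (hμP : IsMoebius (· ≤ · : α → α → Prop) μP)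
    (μ' : ZipCarrier α x y z → ZipCarrier α x y z → ℤ)
    (hμ' : IsMoebius (zipLE x y z) μ') :
    (∀ a : {p : α // p ≠ x ∧ p ≠ y ∧ p ≠ z},
      zipLE x y z (Sum.inl a) (Sum.inr ()) →
        μ' (Sum.inl a) (Sum.inr ()) = μP a.val x ∧ μP a.val x = μP a.val y) ∧
    (∀ a b : {p : α // p ≠ x ∧ p ≠ y ∧ p ≠ z},
      zipLE x y z (Sum.inl a) (Sum.inl b) →
        μ' (Sum.inl a) (Sum.inl b) = μP a.val b.val) := by
  have := Fintype.ofFinite α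
  refine ⟨fun a hax => ⟨ZipCarrier.moebius_inl_eq_moebius_rep hzip hμP hμ' a hax, ?_⟩,
    fun a b hab => ZipCarrier.moebius_inl_eq_moebius_rep hzip hμP hμ' a hab⟩
  exact hμP.apply_eq_of_lt_iff_lt hzip.lt_left_iff_lt_right (lt_of_le_of_ne hax a.2.1)
end

section
/- Let P be a finite thin graded poset and let (x,y,z) be a triple of distinct elements satisfying: (i) z covers x and y and covers no other elements. Then D(x) = D(y), i.e., condition (i) of a zipper implies condition (iii) in a thin poset. -/
/-- in a finite thin graded poset, if `z` covers `x` and `y` and covers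
no other elements (with `x, y, z` distinct), then `D(x) = D(y)`: the sets of
elements strictly below `x` and strictly below `y` coincide.  That is, condition (i)
of a zipper implies condition (iii) in a thin poset. -/
theorem thin_cover_implies_same_down_set {α : Type*} [PartialOrder α]
    [BoundedOrder α] [Finite α]
    (rk : α → ℕ) (hrk0 : rk (⊥ : α) = 0)
    (hrkcov : ∀ a b : α, a ⋖ b → rk b = rk a + 1)
    (hthin : ∀ a b : α, a ≤ b → rk b = rk a + 2 → {c : α | a < c ∧ c < b}.ncard = 2)
    (x y z : α) (hxy : x ≠ y) (hxz : x ≠ z) (hyz : y ≠ z)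
    (hcovx : x ⋖ z) (hcovy : y ⋖ z)
    (honly : ∀ w : α, w ⋖ z → w = x ∨ w = y) :
    ∀ a : α, a < x ↔ a < y := by
  have key : ∀ x' y' : α, x' ⋖ z →
      (∀ w : α, w ⋖ z → w = x' ∨ w = y') → ∀ w : α, w ⋖ x' → w < y' := by
    intro x' y' hcx' honly' w hw
    have hwz : w ≤ z := (hw.lt.trans hcx'.lt).le
    have hrk : rk z = rk w + 2 := by
      rw [hrkcov _ _ hcx', hrkcov _ _ hw]
    have hcard := hthin w z hwz hrk
    have hx'mem : x' ∈ {c : α | w < c ∧ c < z} := ⟨hw.lt, hcx'.lt⟩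
    -- there is a second element
    obtain ⟨c, hc, hcne⟩ : ∃ c ∈ {c : α | w < c ∧ c < z}, c ≠ x' := by
      by_contra h
      push_neg at h
      have hsub : {c : α | w < c ∧ c < z} ⊆ {x'} := fun c hc => h c hc
      have := Set.ncard_le_ncard hsub (Set.finite_singleton x')
      simp [Set.ncard_singleton, hcard] at this
    obtain ⟨v, hcv, hvz⟩ := exists_le_covBy_of_lt hc.2
    rcases honly' v hvz with rfl | rfl
    · exact absurd (lt_of_le_of_ne hcv hcne) (hw.2 hc.1)
    · exact lt_of_lt_of_le hc.1 hcv
  intro a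
  constructor
  · intro ha
    obtain ⟨w, haw, hwx⟩ := exists_le_covBy_of_lt ha
    exact lt_of_le_of_lt haw (key x y hcovx honly w hwx)
  · intro ha
    obtain ⟨w, haw, hwy⟩ := exists_le_covBy_of_lt ha
    exact lt_of_le_of_lt haw (key y x hcovy (fun w hw => (honly w hw).symm) w hwy)
end

section
/- Let (W,S) be a Coxeter system with Bruhat order, s ∈ S, and u ≤ w in W with u < us and w < ws. Define η : [u,w] × [1,s] → [u,ws] by η(v,1) = v, and η(v,s) = vs if vs > v, η(v,s) = v if vs < v (here [1,s] is a two-element chain). Then η is well-defined and is an order-projection. -/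
/-- Bruhat order on a Coxeter group, defined via the subword property:
`u ≤ v` iff some reduced word for `v` contains a reduced word for `u` as a subword. -/
def bruhatLE {B W : Type*} [Group W] {M : CoxeterMatrix B}
    (cs : CoxeterSystem M W) (u v : W) : Prop :=
  ∃ lv lu : List B, cs.IsReduced lv ∧ cs.wordProd lv = v ∧
    cs.IsReduced lu ∧ cs.wordProd lu = u ∧ lu.Sublist lv

/-- Strict Bruhat order. -/
def bruhatLT {B W : Type*} [Group W] {M : CoxeterMatrix B}
    (cs : CoxeterSystem M W) (u v : W) : Prop :=
  bruhatLE cs u v ∧ u ≠ v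

open scoped Classical in
/-- The map `η : [u,w] × [1,s] → [u,ws]`: `η(v,1) = v`; `η(v,s) = vs` if `vs > v`,
and `η(v,s) = v` if `vs < v`.  The chain `[1,s]` is encoded as `Bool`, `false = 1`. -/
noncomputable def etaMap {B W : Type*} [Group W] {M : CoxeterMatrix B}
    (cs : CoxeterSystem M W) (s : B) (v : W) (b : Bool) : W :=
  if b then (if bruhatLT cs v (v * cs.simple s) then v * cs.simple s else v) else v

/-!
Everything rests on the lifting property of Bruhat order: if `x ≤ y` and `y s < y`, then either
`x ≤ y s`, or `x s < x` and `x s ≤ y s`. It shows that `η(v, s) = max(v, v s)` lies below every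
`y ≥ v` having `s` as a right descent; taking `y = w s` gives well-definedness and taking
`y = η(v', s)` gives monotonicity. A relation `q ≤ r` in `[u, w s]` is lifted according to whether
`q` and `r` have `s` as a right descent, again by the lifting property.

Since `bruhatLE` asks for the subword property with respect to *some* reduced word, the lifting
property needs it for *every* reduced word. This follows from identifying `bruhatLE` with paths in
the Bruhat graph, which in turn rests on the strong exchange property, proved via Tits' sign
representation of `W` on `W × ℤˣ`.
-/

namespace CoxeterSystem

open List

variable {B W : Type*} [Group W] {M : CoxeterMatrix B} (cs : CoxeterSystem M W)

local prefix:100 "σ" => cs.simple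
local prefix:100 "π" => cs.wordProd
local prefix:100 "ℓ" => cs.length

open scoped Classical

noncomputable def titsPerm (i : B) : Equiv.Perm (W × ℤˣ) :=
  Function.Involutive.toPerm (fun p => (σ i * p.1 * σ i, p.2 * if p.1 = σ i then -1 else 1)) <| by
    rintro ⟨t, e⟩
    have hconj : σ i * t * σ i = σ i ↔ t = σ i := by
      constructor
      · intro h
        simpa [mul_assoc] using congrArg (σ i * · * σ i) h
      · rintro rfl
        simp
    by_cases ht : t = σ i
    · simp [ht]
    · simp [hconj, ht, ← mul_assoc]

theorem titsPerm_apply (i : B) (p : W × ℤˣ) :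
    cs.titsPerm i p = (σ i * p.1 * σ i, p.2 * if p.1 = σ i then -1 else 1) :=
  rfl

theorem prod_map_titsPerm_apply (ω : List B) (t : W) (e : ℤˣ) :
    (ω.map cs.titsPerm).prod (t, e) =
      (π ω * t * (π ω)⁻¹, e * (-1) ^ ((cs.rightInvSeq ω).count t)) := by
  induction ω generalizing e with
  | nil => simp
  | cons i ω ih =>
    have hconj : π ω * t * (π ω)⁻¹ = σ i ↔ (π ω)⁻¹ * σ i * π ω = t := by
      constructor <;> intro h <;> rw [← h] <;> group
    simp only [map_cons, prod_cons, Equiv.Perm.mul_apply, ih,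
      wordProd_cons, rightInvSeq, count_cons, beq_iff_eq, mul_inv_rev, inv_simple]
    rw [titsPerm_apply]
    refine Prod.ext (by group) ?_
    simp only [hconj]
    split_ifs <;> simp [pow_succ]

theorem rightInvSeq_alternatingWord (i i' : B) (N : ℕ) :
    cs.rightInvSeq (alternatingWord i i' N) =
      ((range N).map fun j => σ i' * (σ i * σ i') ^ j).reverse := by
  induction N generalizing i i' with
  | zero => rfl
  | succ N ih =>
    rw [alternatingWord_succ, rightInvSeq_concat, ih, range_succ_eq_map]
    simp only [map_reverse, map_map, map_cons, reverse_cons, concat_eq_append, pow_zero,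
      mul_one]
    congr 2
    refine map_congr_left fun j _ => ?_
    simp only [Function.comp_apply, MulAut.conj_apply, inv_simple]
    rw [pow_succ, ← mul_assoc ((σ i * σ i') ^ j) (σ i), mul_pow_mul]
    simp only [mul_assoc]

theorem even_count_rightInvSeq_alternatingWord (i i' : B) (t : W) :
    Even ((cs.rightInvSeq (alternatingWord i i' (2 * M i i'))).count t) := by
  have hperiod : ∀ j, σ i' * (σ i * σ i') ^ (M i i' + j) = σ i' * (σ i * σ i') ^ j := fun j => by
    rw [pow_add, cs.simple_mul_simple_pow, one_mul]
  rw [rightInvSeq_alternatingWord, count_reverse, two_mul, range_add, map_append, map_map]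
  simp only [Function.comp_def, hperiod, count_append]
  exact ⟨_, rfl⟩

theorem isLiftable_titsPerm : M.IsLiftable cs.titsPerm := by
  intro i i'
  have hword : ∀ k : ℕ, (cs.titsPerm i * cs.titsPerm i') ^ k
      = ((alternatingWord i i' (2 * k)).map cs.titsPerm).prod := by
    intro k
    induction k with
    | zero => rfl
    | succ k ih =>
      have hodd : ¬ Even (2 * k + 1) := by simp [parity_simps]
      rw [pow_succ', ih, show 2 * (k + 1) = 2 * k + 1 + 1 by ring, alternatingWord_succ',
        alternatingWord_succ', if_neg hodd, if_pos (even_two_mul k)]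
      simp [mul_assoc]
  have hprod : π (alternatingWord i i' (2 * M i i')) = 1 := by
    simp [prod_alternatingWord_eq_mul_pow, cs.simple_mul_simple_pow]
  ext ⟨t, e⟩ : 1
  obtain ⟨c, hc⟩ := cs.even_count_rightInvSeq_alternatingWord i i' t
  rw [hword, prod_map_titsPerm_apply, hprod, hc, ← two_mul, pow_mul]
  simp

noncomputable def titsHom : W →* Equiv.Perm (W × ℤˣ) :=
  cs.lift ⟨cs.titsPerm, cs.isLiftable_titsPerm⟩

theorem titsHom_wordProd_apply (ω : List B) (t : W) (e : ℤˣ) :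
    cs.titsHom (π ω) (t, e) =
      (π ω * t * (π ω)⁻¹, e * (-1) ^ ((cs.rightInvSeq ω).count t)) := by
  have : cs.titsHom (π ω) = (ω.map cs.titsPerm).prod := by
    induction ω with
    | nil => simp
    | cons i ω ih =>
      rw [wordProd_cons, map_mul, ih, map_cons, prod_cons, titsHom,
        cs.lift_apply_simple cs.isLiftable_titsPerm]
  rw [this, prod_map_titsPerm_apply]

/-- The reflection cocycle of Björner–Brenti. -/
noncomputable def reflSign (w t : W) : ℤˣ := (cs.titsHom w (t, 1)).2

theorem reflSign_wordProd (ω : List B) (t : W) :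
    cs.reflSign (π ω) t = (-1) ^ ((cs.rightInvSeq ω).count t) := by
  simp [reflSign, titsHom_wordProd_apply]

theorem titsHom_apply (w t : W) (e : ℤˣ) :
    cs.titsHom w (t, e) = (w * t * w⁻¹, e * cs.reflSign w t) := by
  obtain ⟨ω, rfl⟩ := cs.wordProd_surjective w
  rw [titsHom_wordProd_apply, reflSign_wordProd]

theorem reflSign_mul (x y t : W) :
    cs.reflSign (x * y) t = cs.reflSign y t * cs.reflSign x (y * t * y⁻¹) := by
  have h : cs.titsHom (x * y) (t, 1) = cs.titsHom x (cs.titsHom y (t, 1)) := by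
    rw [map_mul]
    rfl
  rw [titsHom_apply cs y, titsHom_apply cs x, titsHom_apply cs (x * y)] at h
  simpa using congrArg Prod.snd h

theorem reflSign_one (t : W) : cs.reflSign 1 t = 1 := by
  rw [reflSign, map_one]
  rfl

theorem reflSign_simple_self (i : B) : cs.reflSign (σ i) (σ i) = -1 := by
  simpa using cs.reflSign_wordProd [i] (σ i)

theorem reflSign_self {t : W} (ht : cs.IsReflection t) : cs.reflSign t t = -1 := by
  obtain ⟨u, i, rfl⟩ := ht
  have hu : 1 = cs.reflSign u⁻¹ (u * σ i * u⁻¹) * cs.reflSign u (σ i) := by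
    rw [← reflSign_one cs (u * σ i * u⁻¹), ← mul_inv_cancel u, reflSign_mul]
    congr 2
    group
  have hsu : cs.reflSign (σ i * u⁻¹) (u * σ i * u⁻¹) = - cs.reflSign u⁻¹ (u * σ i * u⁻¹) := by
    rw [reflSign_mul, show u⁻¹ * (u * σ i * u⁻¹) * u⁻¹⁻¹ = σ i by group, reflSign_simple_self,
      mul_neg_one]
  rw [show u * σ i * u⁻¹ = u * (σ i * u⁻¹) by group, reflSign_mul,
    show σ i * u⁻¹ * (u * (σ i * u⁻¹)) * (σ i * u⁻¹)⁻¹ = σ i by group,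
    show u * (σ i * u⁻¹) = u * σ i * u⁻¹ by group, hsu, neg_mul, ← hu]

theorem mem_rightInvSeq_of_reflSign_eq_neg_one {ω : List B} {t : W}
    (h : cs.reflSign (π ω) t = -1) : t ∈ cs.rightInvSeq ω := by
  by_contra hmem
  rw [reflSign_wordProd, count_eq_zero_of_not_mem hmem, pow_zero] at h
  exact absurd h (by decide)

theorem reflSign_eq_neg_one_iff {w t : W} (ht : cs.IsReflection t) :
    cs.reflSign w t = -1 ↔ ℓ (w * t) < ℓ w := by
  have hinv : ∀ w, cs.reflSign w t = -1 → ℓ (w * t) < ℓ w := fun w h => by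
    obtain ⟨ω, hω, rfl⟩ := cs.exists_isReduced w
    exact (cs.isRightInversion_of_mem_rightInvSeq hω
      (cs.mem_rightInvSeq_of_reflSign_eq_neg_one h)).2
  refine ⟨hinv w, fun hlt => (Int.units_eq_one_or _).resolve_left fun h1 => ?_⟩
  have hwt : cs.reflSign (w * t) t = -1 := by
    rw [reflSign_mul, reflSign_self cs ht, show t * t * t⁻¹ = t by group, h1, mul_one]
  have := hinv _ hwt
  rw [mul_assoc, ht.mul_self, mul_one] at this
  omega

/-- The strong exchange property. -/
theorem exists_eraseIdx_of_length_mul_lt {ω : List B} {t : W} (ht : cs.IsReflection t)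
    (h : ℓ (π ω * t) < ℓ (π ω)) : ∃ j < ω.length, π ω * t = π (ω.eraseIdx j) := by
  obtain ⟨j, hj, rfl⟩ := List.mem_iff_getElem.mp
    (cs.mem_rightInvSeq_of_reflSign_eq_neg_one ((cs.reflSign_eq_neg_one_iff ht).2 h))
  rw [length_rightInvSeq] at hj
  refine ⟨j, hj, ?_⟩
  rw [← wordProd_mul_getD_rightInvSeq, getD_eq_getElem]

theorem isRightDescent_mul_simple_of_not_isRightDescent {w : W} {i : B}
    (h : ¬ cs.IsRightDescent w i) : cs.IsRightDescent (w * σ i) i :=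
  cs.isRightDescent_iff_not_isRightDescent_mul.mpr (by rwa [simple_mul_simple_cancel_right])

variable {cs} in
theorem IsReduced.append_singleton {ω : List B} {i : B} (hω : cs.IsReduced ω)
    (hi : ¬ cs.IsRightDescent (π ω) i) : cs.IsReduced (ω ++ [i]) := by
  rw [IsReduced, wordProd_append, wordProd_singleton, cs.not_isRightDescent_iff.mp hi, hω,
    length_append, length_singleton]

theorem exists_isReduced_sublist (ω : List B) :
    ∃ l, l <+ ω ∧ cs.IsReduced l ∧ π l = π ω := by
  induction ω using List.reverseRecOn with
  | nil => exact ⟨[], .slnil, by simp [IsReduced], rfl⟩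
  | append_singleton ω i ih =>
    obtain ⟨l, hsub, hl, hπ⟩ := ih
    have hπi : π (ω ++ [i]) = π l * σ i := by rw [wordProd_append, wordProd_singleton, hπ]
    by_cases hi : cs.IsRightDescent (π l) i
    · obtain ⟨j, hj, hdel⟩ := cs.exists_eraseIdx_of_length_mul_lt (cs.isReflection_simple i) hi
      refine ⟨l.eraseIdx j, ((l.eraseIdx_sublist j).trans hsub).trans (sublist_append_left _ _),
        ?_, by rw [hπi, hdel]⟩
      have hlen := cs.isRightDescent_iff.mp hi
      rw [IsReduced, ← hdel, length_eraseIdx_of_lt hj, ← hl]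
      omega
    · exact ⟨l ++ [i], hsub.append (.refl _), hl.append_singleton hi,
        by rw [hπi, wordProd_append, wordProd_singleton]⟩

def BruhatEdge (x y : W) : Prop := ∃ t, cs.IsReflection t ∧ y = x * t ∧ ℓ x < ℓ y

def BruhatChain : W → W → Prop := Relation.ReflTransGen cs.BruhatEdge

theorem bruhatEdge_simple_mul {x : W} {i : B} (h : ℓ x < ℓ (σ i * x)) :
    cs.BruhatEdge x (σ i * x) :=
  ⟨x⁻¹ * σ i * x, ⟨x⁻¹, i, by group⟩, by group, h⟩

variable {cs}

theorem BruhatChain.exists_isReduced_sublist {u w : W} (h : cs.BruhatChain u w) {ρ : List B}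
    (hρ : cs.IsReduced ρ) (hπ : π ρ = w) : ∃ l, cs.IsReduced l ∧ l <+ ρ ∧ π l = u := by
  induction h generalizing ρ with
  | refl => exact ⟨ρ, hρ, .refl ρ, hπ⟩
  | @tail v _ _ hvw ih =>
    obtain ⟨t, ht, rfl, hlt⟩ := hvw
    have hv : π ρ * t = v := by rw [hπ, mul_assoc, ht.mul_self, mul_one]
    obtain ⟨j, -, hdel⟩ := cs.exists_eraseIdx_of_length_mul_lt ht (by rwa [hv, hπ])
    obtain ⟨l₁, hsub, hred, hπ₁⟩ := cs.exists_isReduced_sublist (ρ.eraseIdx j)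
    obtain ⟨l, hl, hsub', hπl⟩ := ih hred (by rw [hπ₁, ← hdel, hv])
    exact ⟨l, hl, hsub'.trans (hsub.trans (ρ.eraseIdx_sublist j)), hπl⟩

theorem BruhatEdge.lift {n : ℕ}
    (hP : ∀ ρ l : List B, cs.IsReduced ρ → ρ.length < n → l <+ ρ → cs.BruhatChain (π l) (π ρ))
    {v w : W} (h : cs.BruhatEdge v w) (hw : ℓ w ≤ n) (i : B) :
    cs.BruhatChain (σ i * v) w ∨ cs.BruhatChain (σ i * v) (σ i * w) := by
  obtain ⟨t, ht, rfl, hlt⟩ := h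
  by_cases hv : cs.IsLeftDescent v i
  · have hedge := cs.bruhatEdge_simple_mul (x := σ i * v) (i := i)
      (by rwa [simple_mul_simple_cancel_left])
    rw [simple_mul_simple_cancel_left] at hedge
    exact .inl ((Relation.ReflTransGen.single hedge).tail ⟨t, ht, rfl, hlt⟩)
  by_cases hvt : cs.IsLeftDescent (v * t) i
  · obtain ⟨ρ, hρ, hρvt⟩ := cs.exists_isReduced (σ i * (v * t))
    have hπ : π (i :: ρ) = v * t := by
      rw [wordProd_cons, ← hρvt, simple_mul_simple_cancel_left]
    have hred : cs.IsReduced (i :: ρ) := by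
      rw [IsReduced, hπ, length_cons, ← hρ, ← hρvt, cs.isLeftDescent_iff.mp hvt]
    have hvt' : π (i :: ρ) * t = v := by rw [hπ, mul_assoc, ht.mul_self, mul_one]
    obtain ⟨j, -, hdel⟩ := cs.exists_eraseIdx_of_length_mul_lt ht (by rwa [hvt', hπ])
    have hv' : v = π ((i :: ρ).eraseIdx j) := by rw [← hdel, hvt']
    rcases j with _ | j
    · left
      rw [show σ i * v = v * t by
        conv_lhs => rw [hv', eraseIdx_cons_zero, ← hρvt, simple_mul_simple_cancel_left]]
      exact .refl
    · right
      rw [hρvt, show σ i * v = π (ρ.eraseIdx j) by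
        conv_lhs => rw [hv', eraseIdx_cons_succ, wordProd_cons, simple_mul_simple_cancel_left]]
      refine hP ρ _ hρ ?_ (eraseIdx_sublist ρ j)
      have := cs.isLeftDescent_iff.mp hvt
      rw [← hρ, ← hρvt]
      omega
  · right
    refine .single ⟨t, ht, by rw [mul_assoc], ?_⟩
    rw [cs.not_isLeftDescent_iff.mp hv, cs.not_isLeftDescent_iff.mp hvt]
    omega

theorem BruhatChain.lift {n : ℕ}
    (hP : ∀ ρ l : List B, cs.IsReduced ρ → ρ.length < n → l <+ ρ → cs.BruhatChain (π l) (π ρ))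
    {u w : W} (h : cs.BruhatChain u w) (hw : ℓ w ≤ n) (i : B) :
    cs.BruhatChain (σ i * u) w ∨ cs.BruhatChain (σ i * u) (σ i * w) := by
  induction h with
  | refl => exact .inr .refl
  | @tail v _ _ hvw ih =>
    have hv : ℓ v ≤ n := by obtain ⟨_, _, _, hlt⟩ := hvw; omega
    rcases ih hv with h | h
    · exact .inl (h.tail hvw)
    · rcases hvw.lift hP hw i with h' | h'
      · exact .inl (h.trans h')
      · exact .inr (h.trans h')

/-- By strong induction on `ρ.length`: the inductive step uses `BruhatChain.lift`, which needs this
statement for shorter reduced words. -/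
theorem bruhatChain_wordProd_of_sublist {ρ l : List B} (hρ : cs.IsReduced ρ) (hl : l <+ ρ) :
    cs.BruhatChain (π l) (π ρ) := by
  induction hn : ρ.length using Nat.strong_induction_on generalizing ρ l with
  | _ n ih =>
  cases ρ with
  | nil =>
    rw [sublist_nil.mp hl]
    exact .refl
  | cons i ρ =>
    have hρ' : cs.IsReduced ρ := by simpa using hρ.drop 1
    have hlen : ρ.length < n := by simp only [length_cons] at hn; omega
    have hedge : cs.BruhatEdge (π ρ) (π (i :: ρ)) := by
      rw [wordProd_cons]
      apply bruhatEdge_simple_mul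
      rw [← wordProd_cons, hρ, hρ', length_cons]
      omega
    rcases sublist_cons_iff.mp hl with hsub | ⟨l, rfl, hsub⟩
    · exact (ih _ hlen hρ' hsub rfl).tail hedge
    · have hP : ∀ ρ' l' : List B, cs.IsReduced ρ' → ρ'.length < ρ.length → l' <+ ρ' →
          cs.BruhatChain (π l') (π ρ') := fun ρ' l' h₁ h₂ h₃ => ih _ (by omega) h₁ h₃ rfl
      rcases (ih _ hlen hρ' hsub rfl).lift hP hρ'.le i with h | h
      · exact h.tail hedge
      · rwa [← wordProd_cons, ← wordProd_cons] at h

end CoxeterSystem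

section BruhatOrder

open CoxeterSystem List

variable {B W : Type*} [Group W] {M : CoxeterMatrix B} {cs : CoxeterSystem M W}

local prefix:100 "σ" => cs.simple
local prefix:100 "π" => cs.wordProd
local prefix:100 "ℓ" => cs.length

theorem bruhatLE_iff_bruhatChain {u w : W} : bruhatLE cs u w ↔ cs.BruhatChain u w := by
  constructor
  · rintro ⟨ρ, l, hρ, rfl, -, rfl, hsub⟩
    exact bruhatChain_wordProd_of_sublist hρ hsub
  · intro h
    obtain ⟨ρ, hρ, rfl⟩ := cs.exists_isReduced w
    obtain ⟨l, hl, hsub, rfl⟩ := h.exists_isReduced_sublist hρ rfl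
    exact ⟨ρ, l, hρ, rfl, hl, rfl, hsub⟩

/-- Unlike in the definition of `bruhatLE`, the reduced word `ρ` of `w` is arbitrary. -/
theorem bruhatLE.exists_isReduced_sublist {u w : W} (h : bruhatLE cs u w) {ρ : List B}
    (hρ : cs.IsReduced ρ) (hπ : π ρ = w) : ∃ l, cs.IsReduced l ∧ l <+ ρ ∧ π l = u :=
  (bruhatLE_iff_bruhatChain.mp h).exists_isReduced_sublist hρ hπ

theorem bruhatLE.refl (w : W) : bruhatLE cs w w :=
  bruhatLE_iff_bruhatChain.mpr .refl

theorem bruhatLE.trans {u v w : W} (h₁ : bruhatLE cs u v) (h₂ : bruhatLE cs v w) :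
    bruhatLE cs u w :=
  bruhatLE_iff_bruhatChain.mpr
    (Relation.ReflTransGen.trans (bruhatLE_iff_bruhatChain.mp h₁) (bruhatLE_iff_bruhatChain.mp h₂))

theorem bruhatLE.length_le {u w : W} (h : bruhatLE cs u w) : ℓ u ≤ ℓ w := by
  obtain ⟨ρ, l, hρ, rfl, hl, rfl, hsub⟩ := h
  rw [hρ, hl]
  exact hsub.length_le

theorem bruhatLE_mul_simple_of_not_isRightDescent {v : W} {i : B}
    (h : ¬ cs.IsRightDescent v i) : bruhatLE cs v (v * σ i) := by
  obtain ⟨ρ, hρ, rfl⟩ := cs.exists_isReduced v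
  exact ⟨ρ ++ [i], ρ, hρ.append_singleton h, by rw [wordProd_append, wordProd_singleton], hρ, rfl,
    sublist_append_left _ _⟩

theorem mul_simple_bruhatLE_of_isRightDescent {v : W} {i : B} (h : cs.IsRightDescent v i) :
    bruhatLE cs (v * σ i) v := by
  simpa [simple_mul_simple_cancel_right] using
    bruhatLE_mul_simple_of_not_isRightDescent (cs.isRightDescent_iff_not_isRightDescent_mul.mp h)

theorem bruhatLT_mul_simple_iff {v : W} {i : B} :
    bruhatLT cs v (v * σ i) ↔ ¬ cs.IsRightDescent v i :=
  ⟨fun h hv => absurd h.1.length_le (not_le.mpr hv), fun hv =>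
    ⟨bruhatLE_mul_simple_of_not_isRightDescent hv,
      fun heq => cs.length_mul_simple_ne v i (congrArg cs.length heq).symm⟩⟩

theorem bruhatLE.mul_simple_of_not_isRightDescent {x y : W} {i : B} (h : bruhatLE cs x y)
    (hx : ¬ cs.IsRightDescent x i) (hy : ¬ cs.IsRightDescent y i) :
    bruhatLE cs (x * σ i) (y * σ i) := by
  obtain ⟨ρ, l, hρ, rfl, hl, rfl, hsub⟩ := h
  exact ⟨ρ ++ [i], l ++ [i], hρ.append_singleton hy, by rw [wordProd_append, wordProd_singleton],
    hl.append_singleton hx, by rw [wordProd_append, wordProd_singleton], hsub.append (.refl _)⟩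

/-- The lifting property. -/
theorem bruhatLE.le_mul_simple_or_of_isRightDescent {x y : W} {i : B} (h : bruhatLE cs x y)
    (hy : cs.IsRightDescent y i) :
    bruhatLE cs x (y * σ i) ∨ (cs.IsRightDescent x i ∧ bruhatLE cs (x * σ i) (y * σ i)) := by
  obtain ⟨ρ, hρ, hρy⟩ := cs.exists_isReduced (y * σ i)
  have hρi : cs.IsReduced (ρ ++ [i]) :=
    hρ.append_singleton (hρy ▸ cs.isRightDescent_iff_not_isRightDescent_mul.mp hy)
  have hπ : π (ρ ++ [i]) = y := by
    rw [wordProd_append, wordProd_singleton, ← hρy, simple_mul_simple_cancel_right]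
  obtain ⟨l, hl, hsub, rfl⟩ := h.exists_isReduced_sublist hρi hπ
  obtain ⟨l₁, l₂, rfl, hsub₁, hsub₂⟩ := sublist_append_iff.mp hsub
  rcases sublist_singleton.mp hsub₂ with rfl | rfl
  · rw [append_nil] at hl ⊢
    exact .inl ⟨ρ, l₁, hρ, hρy.symm, hl, rfl, hsub₁⟩
  · have hl₁ : cs.IsReduced l₁ := by simpa using hl.take l₁.length
    have hx : π (l₁ ++ [i]) * σ i = π l₁ := by
      rw [wordProd_append, wordProd_singleton, simple_mul_simple_cancel_right]
    refine .inr ⟨?_, hx ▸ ⟨ρ, l₁, hρ, hρy.symm, hl₁, rfl, hsub₁⟩⟩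
    rw [IsRightDescent, hx, hl, hl₁, length_append, length_singleton]
    omega

theorem bruhatLE.le_mul_simple_of_isRightDescent {x y : W} {i : B} (h : bruhatLE cs x y)
    (hx : ¬ cs.IsRightDescent x i) (hy : cs.IsRightDescent y i) : bruhatLE cs x (y * σ i) :=
  (h.le_mul_simple_or_of_isRightDescent hy).resolve_right fun h' => hx h'.1

theorem bruhatLE.mul_simple_of_isRightDescent {x y : W} {i : B} (h : bruhatLE cs x y)
    (hx : cs.IsRightDescent x i) (hy : cs.IsRightDescent y i) :
    bruhatLE cs (x * σ i) (y * σ i) :=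
  (h.le_mul_simple_or_of_isRightDescent hy).elim
    (fun h' => (mul_simple_bruhatLE_of_isRightDescent hx).trans h') And.right

theorem bruhatLE.mul_simple_le_of_isRightDescent {x y : W} {i : B} (h : bruhatLE cs x y)
    (hy : cs.IsRightDescent y i) : bruhatLE cs (x * σ i) y := by
  by_cases hx : cs.IsRightDescent x i
  · exact (mul_simple_bruhatLE_of_isRightDescent hx).trans h
  · simpa [simple_mul_simple_cancel_right] using
      (h.le_mul_simple_of_isRightDescent hx hy).mul_simple_of_not_isRightDescent hx
        (cs.isRightDescent_iff_not_isRightDescent_mul.mp hy)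

variable (s : B)

theorem etaMap_false (v : W) : etaMap cs s v false = v := rfl

theorem etaMap_true_of_isRightDescent {v : W} (hv : cs.IsRightDescent v s) :
    etaMap cs s v true = v := by
  simp [etaMap, bruhatLT_mul_simple_iff, hv]

theorem etaMap_true_of_not_isRightDescent {v : W} (hv : ¬ cs.IsRightDescent v s) :
    etaMap cs s v true = v * σ s := by
  simp [etaMap, bruhatLT_mul_simple_iff, hv]

theorem etaMap_mul_simple_true {v : W} (hv : cs.IsRightDescent v s) :
    etaMap cs s (v * σ s) true = v := by
  rw [etaMap_true_of_not_isRightDescent s (cs.isRightDescent_iff_not_isRightDescent_mul.mp hv),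
    simple_mul_simple_cancel_right]

theorem etaMap_eq_or (v : W) (b : Bool) : etaMap cs s v b = v ∨ etaMap cs s v b = v * σ s := by
  unfold etaMap
  split_ifs <;> simp

theorem bruhatLE_etaMap (v : W) (b : Bool) : bruhatLE cs v (etaMap cs s v b) := by
  cases b
  · exact .refl v
  by_cases hv : cs.IsRightDescent v s
  · rw [etaMap_true_of_isRightDescent s hv]
    exact .refl v
  · rw [etaMap_true_of_not_isRightDescent s hv]
    exact bruhatLE_mul_simple_of_not_isRightDescent hv

theorem isRightDescent_etaMap_true (v : W) : cs.IsRightDescent (etaMap cs s v true) s := by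
  by_cases hv : cs.IsRightDescent v s
  · rwa [etaMap_true_of_isRightDescent s hv]
  · rw [etaMap_true_of_not_isRightDescent s hv]
    exact cs.isRightDescent_mul_simple_of_not_isRightDescent hv

theorem etaMap_le_of_isRightDescent {v y : W} (h : bruhatLE cs v y)
    (hy : cs.IsRightDescent y s) (b : Bool) : bruhatLE cs (etaMap cs s v b) y := by
  rcases etaMap_eq_or s v b with heq | heq <;> rw [heq]
  · exact h
  · exact h.mul_simple_le_of_isRightDescent hy

theorem exists_etaMap_eq_of_bruhatLE {u w q r : W} (hu : ¬ cs.IsRightDescent u s)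
    (hw : ¬ cs.IsRightDescent w s) (huq : bruhatLE cs u q) (hqr : bruhatLE cs q r)
    (hr : bruhatLE cs r (w * σ s)) :
    ∃ (v v' : W) (b b' : Bool),
      bruhatLE cs u v ∧ bruhatLE cs v w ∧ bruhatLE cs u v' ∧ bruhatLE cs v' w ∧
      bruhatLE cs v v' ∧ b ≤ b' ∧ etaMap cs s v b = q ∧ etaMap cs s v' b' = r := by
  have hws := cs.isRightDescent_mul_simple_of_not_isRightDescent hw
  have hur := huq.trans hqr
  by_cases hrs : cs.IsRightDescent r s
  · have hrs_w : bruhatLE cs (r * σ s) w := by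
      simpa [simple_mul_simple_cancel_right] using hr.mul_simple_of_isRightDescent hrs hws
    have hu_rs := hur.le_mul_simple_of_isRightDescent hu hrs
    by_cases hqs : cs.IsRightDescent q s
    · have hqs_rs := hqr.mul_simple_of_isRightDescent hqs hrs
      exact ⟨q * σ s, r * σ s, true, true, huq.le_mul_simple_of_isRightDescent hu hqs,
        hqs_rs.trans hrs_w, hu_rs, hrs_w, hqs_rs, le_rfl, etaMap_mul_simple_true s hqs,
        etaMap_mul_simple_true s hrs⟩
    · have hq_rs := hqr.le_mul_simple_of_isRightDescent hqs hrs
      exact ⟨q, r * σ s, false, true, huq, hq_rs.trans hrs_w, hu_rs, hrs_w, hq_rs,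
        Bool.false_le _, etaMap_false s q, etaMap_mul_simple_true s hrs⟩
  · have hrw : bruhatLE cs r w := by
      simpa [simple_mul_simple_cancel_right] using hr.le_mul_simple_of_isRightDescent hrs hws
    exact ⟨q, r, false, false, huq, hqr.trans hrw, hur, hrw, hqr, le_rfl, etaMap_false s q,
      etaMap_false s r⟩

end BruhatOrder

theorem eta_is_order_projection_general {B W : Type*} [Group W] {M : CoxeterMatrix B}
    (cs : CoxeterSystem M W) (u w : W) (s : B)
    (hu : bruhatLT cs u (u * cs.simple s))
    (hw : bruhatLT cs w (w * cs.simple s)) :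
    -- well-defined: η maps [u,w] × [1,s] into [u,ws]
    (∀ (v : W) (b : Bool), bruhatLE cs u v → bruhatLE cs v w →
      bruhatLE cs u (etaMap cs s v b) ∧
      bruhatLE cs (etaMap cs s v b) (w * cs.simple s)) ∧
    -- order-preserving
    (∀ (v v' : W) (b b' : Bool),
      bruhatLE cs u v → bruhatLE cs v w → bruhatLE cs u v' → bruhatLE cs v' w →
      bruhatLE cs v v' → b ≤ b' →
      bruhatLE cs (etaMap cs s v b) (etaMap cs s v' b')) ∧
    -- order-projection: every relation q ≤ r in [u,ws] is the image of a relation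
    (∀ q r : W, bruhatLE cs u q → bruhatLE cs q r → bruhatLE cs r (w * cs.simple s) →
      ∃ (v v' : W) (b b' : Bool),
        bruhatLE cs u v ∧ bruhatLE cs v w ∧ bruhatLE cs u v' ∧ bruhatLE cs v' w ∧
        bruhatLE cs v v' ∧ b ≤ b' ∧ etaMap cs s v b = q ∧ etaMap cs s v' b' = r) := by
  rw [bruhatLT_mul_simple_iff] at hu hw
  refine ⟨fun v b huv hvw => ⟨huv.trans (bruhatLE_etaMap s v b), ?_⟩, ?_,
    fun q r huq hqr hr => exists_etaMap_eq_of_bruhatLE s hu hw huq hqr hr⟩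
  · exact etaMap_le_of_isRightDescent s (hvw.trans (bruhatLE_mul_simple_of_not_isRightDescent hw))
      (cs.isRightDescent_mul_simple_of_not_isRightDescent hw) b
  · intro v v' b b' _ _ _ _ hvv' hbb'
    cases b'
    · obtain rfl := Bool.eq_false_of_le_false hbb'
      exact hvv'
    · exact etaMap_le_of_isRightDescent s (hvv'.trans (bruhatLE_etaMap s v' true))
        (isRightDescent_etaMap_true s v') b

/-- `η` is well-defined and is an order-projection from
`[u,w] × [1,s]` onto `[u,ws]`. -/
theorem eta_is_order_projection {B W : Type*} [Group W] {M : CoxeterMatrix B}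
    (cs : CoxeterSystem M W) (u w : W) (s : B)
    (huw : bruhatLE cs u w)
    (hu : bruhatLT cs u (u * cs.simple s))
    (hw : bruhatLT cs w (w * cs.simple s)) :
    -- well-defined: η maps [u,w] × [1,s] into [u,ws]
    (∀ (v : W) (b : Bool), bruhatLE cs u v → bruhatLE cs v w →
      bruhatLE cs u (etaMap cs s v b) ∧
      bruhatLE cs (etaMap cs s v b) (w * cs.simple s)) ∧
    -- order-preserving
    (∀ (v v' : W) (b b' : Bool),
      bruhatLE cs u v → bruhatLE cs v w → bruhatLE cs u v' → bruhatLE cs v' w →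
      bruhatLE cs v v' → b ≤ b' →
      bruhatLE cs (etaMap cs s v b) (etaMap cs s v' b')) ∧
    -- order-projection: every relation q ≤ r in [u,ws] is the image of a relation
    (∀ q r : W, bruhatLE cs u q → bruhatLE cs q r → bruhatLE cs r (w * cs.simple s) →
      ∃ (v v' : W) (b b' : Bool),
        bruhatLE cs u v ∧ bruhatLE cs v w ∧ bruhatLE cs u v' ∧ bruhatLE cs v' w ∧
        bruhatLE cs v v' ∧ b ≤ b' ∧ etaMap cs s v b = q ∧ etaMap cs s v' b' = r) :=
  eta_is_order_projection_general cs u w s hu hw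
end

section
/- Every Bruhat interval [u,v] in a Coxeter group is an Eulerian poset: μ(x,y) = (−1)^{l(y)−l(x)} for all x ≤ y in [u,v]. -/
open scoped Classical

/-!
Strong exchange comes from Tits' trick: `W` acts on `W × ZMod 2` so that a word for `w` sends
`(t, 0)` to `(w t w⁻¹, n)`, where `n` is the parity of the number of occurrences of `t` in the
inversion sequence of the word; so this parity depends only on `w`, and equals `1` when
`ℓ (w t) < ℓ w`. With strong exchange, the subword order coincides with the chain order generated
by `u < u t` (`t` a reflection), and if `s y < y` and `x ≤ y`, then `x ≤ s y`, or `s x < x` and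
`s x ≤ s y`.

This gives Verma's theorem `∑_{z ∈ [x, y]} (-1)^ℓ(z) = 0` for `x < y`, by induction on `ℓ y`,
with `s` a left descent of `y`. If `x < s x`, left multiplication by `s` is a sign-reversing
involution of `[x, y]`. If `s x < x`, the elements of `[s x, y]` not above `x` are exactly those
of `[s x, s y]` not above `x`, so the sum over `[x, y]` is the sum over `[s x, y]` (zero by the
first case) minus that over `[s x, s y]` plus that over `[x, s y]`. Hence
`z ↦ (-1)^(ℓ z - ℓ x)` satisfies the recursion that defines the Möbius function `μ(x, ·)`.
-/

theorem mul_mul_inv_eq_iff_eq_inv_mul_mul {G : Type*} [Group G] (g t r : G) :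
    g * t * g⁻¹ = r ↔ t = g⁻¹ * r * g := by
  rw [← MulAut.conj_apply, ← MulEquiv.eq_symm_apply, MulAut.conj_symm_apply]

open scoped List

namespace CoxeterSystem

variable {B W : Type*} [Group W] {M : CoxeterMatrix B} (cs : CoxeterSystem M W)

local prefix:100 "s" => cs.simple
local prefix:100 "π" => cs.wordProd
local prefix:100 "ℓ" => cs.length
local prefix:100 "ris" => cs.rightInvSeq

theorem simple_mul_mul_simple_eq_iff (i : B) (t r : W) :
    s i * t * s i = r ↔ t = s i * r * s i := by
  simpa using mul_mul_inv_eq_iff_eq_inv_mul_mul (s i) t r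

noncomputable def simpleReflPerm (i : B) : Equiv.Perm (W × ZMod 2) :=
  Function.Involutive.toPerm (fun p ↦ (s i * p.1 * s i, p.2 + if p.1 = s i then 1 else 0)) <| by
    rintro ⟨t, e⟩
    ext
    · simp [mul_assoc]
    · simp only [simple_mul_mul_simple_eq_iff, simple_mul_simple_self, one_mul, add_assoc,
        CharTwo.add_self_eq_zero, add_zero]

theorem simpleReflPerm_apply (i : B) (t : W) (e : ZMod 2) :
    cs.simpleReflPerm i (t, e) = (s i * t * s i, e + if t = s i then 1 else 0) := rfl

theorem simpleReflPerm_mul_pow_apply (i j : B) (k : ℕ) (t : W) (e : ZMod 2) :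
    ((cs.simpleReflPerm i * cs.simpleReflPerm j) ^ k) (t, e) =
      ((s i * s j) ^ k * t * ((s i * s j) ^ k)⁻¹,
        e + ∑ l ∈ Finset.range (2 * k), if t = (s j * s i) ^ l * s j then 1 else 0) := by
  have hinv : (s i * s j)⁻¹ = s j * s i := by simp
  induction k generalizing t e with
  | zero => simp
  | succ k ih =>
    have hstep : (cs.simpleReflPerm i * cs.simpleReflPerm j) (t, e) =
        ((s i * s j) * t * (s i * s j)⁻¹,
          e + ((if t = s j then 1 else 0) + if t = s j * s i * s j then 1 else 0)) := by
      simp only [Equiv.Perm.mul_apply, simpleReflPerm_apply, hinv, ← add_assoc, Prod.mk.injEq]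
      exact ⟨by simp [mul_assoc], by rw [simple_mul_mul_simple_eq_iff]⟩
    have hshift : ∀ l : ℕ, ((s i * s j) * t * (s i * s j)⁻¹ = (s j * s i) ^ l * s j) ↔
        t = (s j * s i) ^ (l + 2) * s j := fun l ↦ by
      rw [mul_mul_inv_eq_iff_eq_inv_mul_mul, hinv, pow_succ, pow_succ']
      simp only [mul_assoc]
    rw [pow_succ, Equiv.Perm.mul_apply, hstep, ih]
    simp only [hshift, Prod.mk.injEq]
    refine ⟨by simp [pow_succ, mul_assoc], ?_⟩
    rw [show 2 * (k + 1) = 2 * k + 1 + 1 by ring, Finset.sum_range_succ', Finset.sum_range_succ']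
    simp only [pow_zero, one_mul, zero_add, pow_one]
    ring

theorem isLiftable_simpleReflPerm : M.IsLiftable cs.simpleReflPerm := by
  intro i j
  ext ⟨t, e⟩ : 1
  have hperiod (l : ℕ) : (s j * s i) ^ (M i j + l) * s j = (s j * s i) ^ l * s j := by
    rw [pow_add, M.symmetric i j, simple_mul_simple_pow, one_mul]
  rw [simpleReflPerm_mul_pow_apply, simple_mul_simple_pow, two_mul, Finset.sum_range_add]
  simp [hperiod, CharTwo.add_self_eq_zero]

noncomputable def reflRep : W →* Equiv.Perm (W × ZMod 2) :=
  cs.lift ⟨cs.simpleReflPerm, cs.isLiftable_simpleReflPerm⟩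

theorem reflRep_wordProd (ω : List B) (t : W) (e : ZMod 2) :
    cs.reflRep (π ω) (t, e) = (π ω * t * (π ω)⁻¹, e + (ris ω).count t) := by
  induction ω generalizing t e with
  | nil => simp
  | cons i ω ih =>
    have hris : ris (i :: ω) = ((π ω)⁻¹ * s i * π ω) :: ris ω := rfl
    rw [wordProd_cons, map_mul, Equiv.Perm.mul_apply, ih, reflRep, lift_apply_simple,
      simpleReflPerm_apply, hris, List.count_cons, mul_mul_inv_eq_iff_eq_inv_mul_mul]
    simp only [mul_inv_rev, inv_simple, mul_assoc, beq_iff_eq, eq_comm (a := t), Nat.cast_add,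
      Nat.cast_ite, Nat.cast_one, Nat.cast_zero, Prod.mk.injEq, true_and]
    ring

noncomputable def inversionParity (w t : W) : ZMod 2 := (cs.reflRep w (t, 0)).2

theorem inversionParity_wordProd (ω : List B) (t : W) :
    cs.inversionParity (π ω) t = (ris ω).count t := by
  simp [inversionParity, reflRep_wordProd]

theorem reflRep_apply (w t : W) (e : ZMod 2) :
    cs.reflRep w (t, e) = (w * t * w⁻¹, e + cs.inversionParity w t) := by
  obtain ⟨ω, rfl⟩ := cs.wordProd_surjective w
  rw [reflRep_wordProd, inversionParity_wordProd]

theorem inversionParity_mul (a b t : W) :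
    cs.inversionParity (a * b) t = cs.inversionParity b t + cs.inversionParity a (b * t * b⁻¹) := by
  rw [inversionParity, map_mul, Equiv.Perm.mul_apply, cs.reflRep_apply b, cs.reflRep_apply a,
    zero_add]

theorem inversionParity_inv_conj (w t : W) :
    cs.inversionParity w⁻¹ (w * t * w⁻¹) = cs.inversionParity w t := by
  have h := cs.inversionParity_mul w⁻¹ w t
  rw [inv_mul_cancel, show cs.inversionParity 1 t = 0 by simp [inversionParity]] at h
  exact (CharTwo.add_eq_zero.mp h.symm).symm

theorem inversionParity_self {t : W} (ht : cs.IsReflection t) : cs.inversionParity t t = 1 := by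
  obtain ⟨w, i, rfl⟩ := ht
  have hsimple : cs.inversionParity (s i) (s i) = 1 := by
    simpa using cs.inversionParity_wordProd [i] (s i)
  have hconj : w⁻¹ * (w * s i * w⁻¹) * w⁻¹⁻¹ = s i := by group
  rw [inversionParity_mul, inversionParity_mul, hconj, inversionParity_inv_conj, hsimple,
    mul_inv_cancel_right, add_left_comm, CharTwo.add_self_eq_zero, add_zero]

variable {cs} in
theorem IsReflection.mul_mul_self_right {t : W} (ht : cs.IsReflection t) (w : W) :
    w * t * t = w := by
  rw [mul_assoc, ht.mul_self, mul_one]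

theorem mem_rightInvSeq_of_inversionParity_eq_one {ω : List B} {t : W}
    (h : cs.inversionParity (π ω) t = 1) : t ∈ ris ω := by
  by_contra hmem
  rw [inversionParity_wordProd, List.count_eq_zero_of_not_mem hmem] at h
  simp at h

theorem IsRightInversion.inversionParity_eq_one {w t : W} (h : cs.IsRightInversion w t) :
    cs.inversionParity w t = 1 := by
  rcases (by decide : ∀ a : ZMod 2, a = 0 ∨ a = 1) (cs.inversionParity w t) with h0 | h1
  · obtain ⟨ω, hred, hω⟩ := cs.exists_isReduced (w * t)
    have hpar : cs.inversionParity (π ω) t = 1 := by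
      rw [← hω, inversionParity_mul, mul_inv_cancel_right, h0, inversionParity_self cs h.1,
        add_zero]
    have hlt := (cs.isRightInversion_of_mem_rightInvSeq hred
      (cs.mem_rightInvSeq_of_inversionParity_eq_one hpar)).2
    rw [← hω, h.1.mul_mul_self_right] at hlt
    exact absurd h.2 (not_lt.mpr hlt.le)
  · exact h1

/-- The strong exchange property. -/
theorem IsRightInversion.mem_rightInvSeq {ω : List B} {t : W}
    (h : cs.IsRightInversion (π ω) t) : t ∈ ris ω :=
  cs.mem_rightInvSeq_of_inversionParity_eq_one h.inversionParity_eq_one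

theorem IsRightInversion.exists_wordProd_eraseIdx_eq {ω : List B} {t : W}
    (h : cs.IsRightInversion (π ω) t) : ∃ j < ω.length, π (ω.eraseIdx j) = π ω * t := by
  obtain ⟨j, hj, rfl⟩ := List.mem_iff_getElem.mp h.mem_rightInvSeq
  rw [length_rightInvSeq] at hj
  exact ⟨j, hj, by rw [← List.getD_eq_getElem _ 1, wordProd_mul_getD_rightInvSeq]⟩

theorem exists_reduced_sublist (ω : List B) : ∃ σ, σ <+ ω ∧ cs.IsReduced σ ∧ π σ = π ω := by
  induction ω using List.reverseRecOn with
  | nil => exact ⟨[], .slnil, by simp [IsReduced], rfl⟩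
  | append_singleton τ i ih =>
    obtain ⟨σ, hστ, hσ, hστ'⟩ := ih
    rw [wordProd_append, wordProd_singleton, ← hστ']
    rcases cs.length_mul_simple (π σ) i with hlen | hlen
    · refine ⟨σ ++ [i], hστ.append_right [i], ?_, by simp [wordProd_append]⟩
      rw [IsReduced, wordProd_append, wordProd_singleton, hlen, hσ, List.length_append,
        List.length_singleton]
    · obtain ⟨j, hj, hσj⟩ := IsRightInversion.exists_wordProd_eraseIdx_eq cs (ω := σ)
        ⟨cs.isReflection_simple i, by omega⟩
      refine ⟨σ.eraseIdx j, (σ.eraseIdx_sublist j).trans (hστ.trans (τ.sublist_append_left _)),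
        ?_, hσj⟩
      have := List.length_eraseIdx_add_one hj
      have := hσ.eq
      rw [IsReduced, hσj]
      omega

theorem exists_reduced_cons_of_length_simple_mul_lt {w : W} {i : B} (h : ℓ (s i * w) < ℓ w) :
    ∃ α, cs.IsReduced (i :: α) ∧ π (i :: α) = w := by
  obtain ⟨α, hα, hαw⟩ := cs.exists_isReduced (s i * w)
  have hw : π (i :: α) = w := by rw [wordProd_cons, ← hαw, simple_mul_simple_cancel_left]
  refine ⟨α, ?_, hw⟩
  have := cs.length_simple_mul w i
  rw [IsReduced, hw, List.length_cons, ← hα.eq, ← hαw]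
  omega

def BruhatStep (u v : W) : Prop := (∃ t, cs.IsReflection t ∧ u * t = v) ∧ ℓ u < ℓ v

/-- The Bruhat order as originally defined; `bruhatLE_iff_chainLE` is the subword property. -/
def ChainLE : W → W → Prop := Relation.ReflTransGen cs.BruhatStep

theorem IsRightInversion.bruhatStep {w t : W} (h : cs.IsRightInversion w t) :
    cs.BruhatStep (w * t) w :=
  ⟨⟨t, h.1, h.1.mul_mul_self_right w⟩, h.2⟩

theorem bruhatStep_simple_mul {w : W} {i : B} (h : ℓ w < ℓ (s i * w)) :
    cs.BruhatStep w (s i * w) :=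
  ⟨⟨w⁻¹ * s i * w, ⟨w⁻¹, i, by rw [inv_inv]⟩, by group⟩, h⟩

theorem bruhatStep_of_simple_mul {w : W} {i : B} (h : ℓ (s i * w) < ℓ w) :
    cs.BruhatStep (s i * w) w := by
  simpa using cs.bruhatStep_simple_mul (w := s i * w) (i := i) (by simpa using h)

theorem bruhatStep_wordProd_eraseIdx {ω : List B} (hω : cs.IsReduced ω) {j : ℕ}
    (hj : j < ω.length) : cs.BruhatStep (π (ω.eraseIdx j)) (π ω) := by
  have hmem : (ris ω)[j]'(by simpa using hj) ∈ ris ω := List.getElem_mem _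
  rw [← wordProd_mul_getD_rightInvSeq, List.getD_eq_getElem _ 1 (by simpa using hj)]
  exact (cs.isRightInversion_of_mem_rightInvSeq hω hmem).bruhatStep

section ChainLE

variable {cs}

theorem ChainLE.trans {x y z : W} (h₁ : cs.ChainLE x y) (h₂ : cs.ChainLE y z) : cs.ChainLE x z :=
  Relation.ReflTransGen.trans h₁ h₂

theorem ChainLE.length_le {u v : W} (h : cs.ChainLE u v) : ℓ u ≤ ℓ v := by
  induction h with
  | refl => rfl
  | tail _ hstep ih => exact ih.trans hstep.2.le

theorem ChainLE.length_lt_of_ne {u v : W} (h : cs.ChainLE u v) (hne : u ≠ v) : ℓ u < ℓ v := by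
  rcases Relation.ReflTransGen.cases_tail h with rfl | ⟨w, huw, hwv⟩
  · exact (hne rfl).elim
  · exact (ChainLE.length_le huw).trans_lt hwv.2

theorem ChainLE.antisymm {u v : W} (h₁ : cs.ChainLE u v) (h₂ : cs.ChainLE v u) : u = v := by
  by_contra hne
  exact absurd h₂.length_le (not_le.mpr (h₁.length_lt_of_ne hne))

theorem ChainLE.simple_mul_left {x y : W} {i : B} (hy : ℓ (s i * y) < ℓ y)
    (h : cs.ChainLE x y) : cs.ChainLE (s i * x) y := by
  induction h using Relation.ReflTransGen.head_induction_on with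
  | refl => exact .single (cs.bruhatStep_of_simple_mul hy)
  | head hxc hcy ih =>
    rename_i x c
    change cs.ChainLE c y at hcy
    obtain ⟨⟨t, ht, rfl⟩, hlt⟩ := hxc
    rcases cs.length_simple_mul x i with hx | hx
    · rcases cs.length_simple_mul (x * t) i with hc | hc
      · exact .head ⟨⟨t, ht, by rw [mul_assoc]⟩, by omega⟩ ih
      · -- strong exchange deletes one letter of a reduced word `i :: α` for `x t` to give `x`
        obtain ⟨α, hα, hαc⟩ :=
          cs.exists_reduced_cons_of_length_simple_mul_lt (w := x * t) (i := i) (by omega)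
        obtain ⟨j, hj, hjx⟩ := IsRightInversion.exists_wordProd_eraseIdx_eq cs (ω := i :: α)
          ⟨ht, by rw [hαc, ht.mul_mul_self_right]; exact hlt⟩
        rw [hαc, ht.mul_mul_self_right] at hjx
        rw [← hαc] at hcy
        subst hjx
        cases j with
        | zero => simpa [wordProd_cons] using hcy
        | succ k =>
          have hk : k < α.length := by simpa using hj
          simp only [List.eraseIdx_cons_succ, wordProd_cons, simple_mul_simple_cancel_left]
          exact .head (cs.bruhatStep_wordProd_eraseIdx (hα.drop 1) hk)
            (.head (cs.bruhatStep_wordProd_eraseIdx hα (j := 0) (by simp)) hcy)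
    · exact .head (cs.bruhatStep_of_simple_mul (by omega)) (.head ⟨⟨t, ht, rfl⟩, hlt⟩ hcy)

theorem chainLE_wordProd_of_sublist {σ ω : List B} (hω : cs.IsReduced ω) (h : σ <+ ω) :
    cs.ChainLE (π σ) (π ω) := by
  induction h with
  | slnil => exact .refl
  | cons i _ ih =>
    exact (ih (hω.drop 1)).tail (cs.bruhatStep_wordProd_eraseIdx hω (j := 0) (by simp))
  | cons_cons i _ ih =>
    have hstep := cs.bruhatStep_wordProd_eraseIdx hω (j := 0) (by simp)
    rw [wordProd_cons]
    refine ChainLE.simple_mul_left ?_ ((ih (hω.drop 1)).tail hstep)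
    rw [wordProd_cons, simple_mul_simple_cancel_left, ← wordProd_cons]
    simpa using hstep.2

theorem ChainLE.exists_reduced_sublist {x y : W} (h : cs.ChainLE x y) {ω : List B}
    (hω : cs.IsReduced ω) (hωy : π ω = y) : ∃ σ, σ <+ ω ∧ cs.IsReduced σ ∧ π σ = x := by
  induction h generalizing ω with
  | refl => exact ⟨ω, .refl ω, hω, hωy⟩
  | tail _ hstep ih =>
    obtain ⟨⟨t, ht, rfl⟩, hlt⟩ := hstep
    obtain ⟨j, -, hj⟩ := IsRightInversion.exists_wordProd_eraseIdx_eq cs (ω := ω)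
      ⟨ht, by rw [hωy, ht.mul_mul_self_right]; exact hlt⟩
    obtain ⟨τ, hτω, hτ, hτw⟩ := cs.exists_reduced_sublist (ω.eraseIdx j)
    obtain ⟨σ, hστ, hσ, hσx⟩ := ih hτ (by rw [hτw, hj, hωy, ht.mul_mul_self_right])
    exact ⟨σ, hστ.trans (hτω.trans (ω.eraseIdx_sublist j)), hσ, hσx⟩

theorem bruhatLE_iff_chainLE {x y : W} : bruhatLE cs x y ↔ cs.ChainLE x y := by
  constructor
  · rintro ⟨ω, σ, hω, rfl, -, rfl, hσω⟩
    exact chainLE_wordProd_of_sublist hω hσω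
  · intro h
    obtain ⟨ω, hω, rfl⟩ := cs.exists_isReduced y
    obtain ⟨σ, hσω, hσ, rfl⟩ := h.exists_reduced_sublist hω rfl
    exact ⟨ω, σ, hω, rfl, hσ, rfl, hσω⟩

theorem ChainLE.le_simple_mul_or {x y : W} {i : B} (hy : ℓ (s i * y) < ℓ y)
    (h : cs.ChainLE x y) :
    cs.ChainLE x (s i * y) ∨ ℓ (s i * x) < ℓ x ∧ cs.ChainLE (s i * x) (s i * y) := by
  obtain ⟨α, hα, rfl⟩ := cs.exists_reduced_cons_of_length_simple_mul_lt hy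
  obtain ⟨σ, hσα, hσ, rfl⟩ := h.exists_reduced_sublist hα rfl
  rw [wordProd_cons, simple_mul_simple_cancel_left]
  cases hσα with
  | cons _ hsub => exact .inl (chainLE_wordProd_of_sublist (hα.drop 1) hsub)
  | cons_cons _ hsub =>
    rename_i τ
    refine .inr ⟨?_, ?_⟩
    · rw [hσ, wordProd_cons, simple_mul_simple_cancel_left, List.length_cons]
      exact (cs.length_wordProd_le τ).trans_lt (Nat.lt_succ_self _)
    · rw [wordProd_cons, simple_mul_simple_cancel_left]
      exact chainLE_wordProd_of_sublist (hα.drop 1) hsub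

end ChainLE

theorem finite_setOf_chainLE (y : W) : {x | cs.ChainLE x y}.Finite := by
  obtain ⟨ω, hω, rfl⟩ := cs.exists_isReduced y
  refine (ω.sublists.map cs.wordProd).finite_toSet.subset fun x hx ↦ ?_
  obtain ⟨σ, hσω, -, rfl⟩ := ChainLE.exists_reduced_sublist hx hω rfl
  exact List.mem_map.mpr ⟨σ, List.mem_sublists.mpr hσω, rfl⟩

noncomputable def chainIcc (x y : W) : Finset W :=
  (cs.finite_setOf_chainLE y).toFinset.filter (cs.ChainLE x)

theorem mem_chainIcc {x y z : W} : z ∈ cs.chainIcc x y ↔ cs.ChainLE x z ∧ cs.ChainLE z y := by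
  simp [chainIcc, and_comm]

theorem coe_chainIcc (x y : W) :
    (cs.chainIcc x y : Set W) = {z | cs.ChainLE x z ∧ cs.ChainLE z y} := by
  ext z
  simp [mem_chainIcc]

theorem chainIcc_self (x : W) : cs.chainIcc x x = {x} := by
  ext z
  rw [mem_chainIcc, Finset.mem_singleton]
  exact ⟨fun h ↦ (h.1.antisymm h.2).symm, by rintro rfl; exact ⟨.refl, .refl⟩⟩

theorem neg_one_pow_length_simple_mul (w : W) (i : B) :
    (-1 : ℤ) ^ ℓ (s i * w) = -(-1) ^ ℓ w := by
  rcases cs.length_simple_mul w i with h | h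
  · rw [h, pow_succ, mul_neg_one]
  · rw [← h, pow_succ, mul_neg_one, neg_neg]

/-- `z ↦ s i * z` is a sign-reversing involution of `[x, y]`. -/
theorem sum_chainIcc_neg_one_pow_eq_zero_of_ascent {x y : W} {i : B} (hy : ℓ (s i * y) < ℓ y)
    (hx : ℓ x < ℓ (s i * x)) : ∑ z ∈ cs.chainIcc x y, (-1 : ℤ) ^ ℓ z = 0 := by
  refine Finset.sum_involution (fun z _ ↦ s i * z) (fun z _ ↦ ?_) (fun z _ _ h ↦ ?_)
    (fun z hz ↦ ?_) (fun z _ ↦ cs.simple_mul_simple_cancel_left i)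
  · rw [neg_one_pow_length_simple_mul, add_neg_cancel]
  · exact cs.length_simple_mul_ne z i (congrArg cs.length h)
  · rw [mem_chainIcc] at hz ⊢
    obtain ⟨hxz, hzy⟩ := hz
    refine ⟨?_, hzy.simple_mul_left hy⟩
    rcases cs.length_simple_mul z i with h | h
    · exact hxz.tail (cs.bruhatStep_simple_mul (by omega))
    · exact (hxz.le_simple_mul_or (by omega)).resolve_right (by omega)

/-- `[s i * x, y]` is `[x, y]` plus a set it shares with `[s i * x, s i * y]`, whose other part is
`[x, s i * y]`. -/
theorem sum_chainIcc_add_sum_chainIcc_of_descent {G : Type*} [AddCommGroup G] (f : W → G)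
    {x y : W} {i : B} (hy : ℓ (s i * y) < ℓ y) (hx : ℓ (s i * x) < ℓ x) :
    ∑ z ∈ cs.chainIcc x y, f z + ∑ z ∈ cs.chainIcc (s i * x) (s i * y), f z =
      ∑ z ∈ cs.chainIcc (s i * x) y, f z + ∑ z ∈ cs.chainIcc x (s i * y), f z := by
  have hsx : cs.ChainLE (s i * x) x := .single (cs.bruhatStep_of_simple_mul hx)
  have hsy : cs.ChainLE (s i * y) y := .single (cs.bruhatStep_of_simple_mul hy)
  have hfilter (y' : W) (hy' : cs.ChainLE y' y) :
      (cs.chainIcc (s i * x) y').filter (cs.ChainLE x) = cs.chainIcc x y' := by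
    ext z
    simp only [Finset.mem_filter, mem_chainIcc]
    exact ⟨fun h ↦ ⟨h.2, h.1.2⟩, fun h ↦ ⟨⟨hsx.trans h.1, h.2⟩, h.1⟩⟩
  have hrest : (cs.chainIcc (s i * x) y).filter (¬ cs.ChainLE x ·) =
      (cs.chainIcc (s i * x) (s i * y)).filter (¬ cs.ChainLE x ·) := by
    ext z
    simp only [Finset.mem_filter, mem_chainIcc]
    refine ⟨fun ⟨⟨hxz, hzy⟩, hnot⟩ ↦ ⟨⟨hxz, ?_⟩, hnot⟩, fun ⟨⟨hxz, hzy⟩, hnot⟩ ↦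
      ⟨⟨hxz, hzy.trans hsy⟩, hnot⟩⟩
    refine (hzy.le_simple_mul_or hy).resolve_right fun ⟨hz, _⟩ ↦ hnot ?_
    simpa using hxz.simple_mul_left hz
  rw [← Finset.sum_filter_add_sum_filter_not (cs.chainIcc (s i * x) y) (cs.ChainLE x),
    ← Finset.sum_filter_add_sum_filter_not (cs.chainIcc (s i * x) (s i * y)) (cs.ChainLE x),
    hfilter y .refl, hfilter (s i * y) hsy, hrest]
  abel

/-- Verma's theorem. -/
theorem sum_chainIcc_neg_one_pow (x y : W) :
    ∑ z ∈ cs.chainIcc x y, (-1 : ℤ) ^ ℓ z = if x = y then (-1) ^ ℓ x else 0 := by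
  induction hn : ℓ y using Nat.strong_induction_on generalizing x y with
  | _ n ih =>
  split_ifs with hxy
  · rw [hxy, chainIcc_self, Finset.sum_singleton]
  obtain rfl | hy1 := eq_or_ne y 1
  · refine Finset.sum_eq_zero fun z hz ↦ absurd ?_ (Nat.not_lt_zero (ℓ x))
    rw [mem_chainIcc] at hz
    simpa using (hz.1.trans hz.2).length_lt_of_ne hxy
  obtain ⟨i, hi : ℓ (s i * y) < ℓ y⟩ := cs.exists_leftDescent_of_ne_one hy1
  rcases cs.length_simple_mul x i with hx | hx
  · exact cs.sum_chainIcc_neg_one_pow_eq_zero_of_ascent hi (by omega)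
  · have hsum := cs.sum_chainIcc_add_sum_chainIcc_of_descent (fun z ↦ (-1 : ℤ) ^ ℓ z) hi
      (x := x) (by omega)
    have hxsy : x ≠ s i * y := by
      rintro rfl
      rw [simple_mul_simple_cancel_left] at hx
      exact absurd hi (by omega)
    rw [cs.sum_chainIcc_neg_one_pow_eq_zero_of_ascent hi (x := s i * x) (by simp; omega),
      ih _ (hn ▸ hi) (s i * x) (s i * y) rfl, ih _ (hn ▸ hi) x (s i * y) rfl,
      if_neg (by simpa using hxy), if_neg hxsy] at hsum
    simpa using hsum

theorem sum_chainIcc_neg_one_pow_sub (x y : W) :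
    ∑ z ∈ cs.chainIcc x y, (-1 : ℤ) ^ (ℓ z - ℓ x) = if x = y then 1 else 0 := by
  have hsign : ∀ z ∈ cs.chainIcc x y, (-1 : ℤ) ^ (ℓ z - ℓ x) = (-1) ^ ℓ z * (-1) ^ ℓ x :=
    fun z hz ↦ by
      rw [← Nat.sub_add_cancel ((mem_chainIcc cs).mp hz).1.length_le, pow_add, mul_assoc,
        Nat.add_sub_cancel, pow_mul_pow_eq_one _ rfl, mul_one]
  rw [Finset.sum_congr rfl hsign, ← Finset.sum_mul, sum_chainIcc_neg_one_pow]
  split_ifs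
  · exact pow_mul_pow_eq_one _ rfl
  · exact zero_mul _

theorem eq_neg_one_pow_of_sum_chainIcc {u v : W} (μ : W → W → ℤ)
    (hμ : ∀ x y, cs.ChainLE u x → cs.ChainLE x y → cs.ChainLE y v →
      ∑ z ∈ cs.chainIcc x y, μ x z = if x = y then 1 else 0)
    {x y : W} (hux : cs.ChainLE u x) (hxy : cs.ChainLE x y) (hyv : cs.ChainLE y v) :
    μ x y = (-1) ^ (ℓ y - ℓ x) := by
  induction hn : ℓ y using Nat.strong_induction_on generalizing y with
  | _ n ih =>
  have hy : y ∈ cs.chainIcc x y := (mem_chainIcc cs).mpr ⟨hxy, .refl⟩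
  have hlower : ∀ z ∈ (cs.chainIcc x y).erase y, μ x z = (-1) ^ (ℓ z - ℓ x) := by
    intro z hz
    obtain ⟨hzy, hz⟩ := Finset.mem_erase.mp hz
    obtain ⟨hxz, hzy'⟩ := (mem_chainIcc cs).mp hz
    exact ih _ (hn ▸ hzy'.length_lt_of_ne hzy) hxz (hzy'.trans hyv) rfl
  have hsum := hμ x y hux hxy hyv
  rw [← sum_chainIcc_neg_one_pow_sub, ← Finset.add_sum_erase _ _ hy,
    ← Finset.add_sum_erase _ _ hy, Finset.sum_congr rfl hlower] at hsum
  rw [← hn]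
  exact add_right_cancel hsum

end CoxeterSystem

theorem bruhat_interval_eulerian_general {B W : Type*} [Group W] {M : CoxeterMatrix B}
    (cs : CoxeterSystem M W) (u v : W)
    (μ : W → W → ℤ)
    (hμ : ∀ x y : W, bruhatLE cs u x → bruhatLE cs x y → bruhatLE cs y v →
      (∑ᶠ z ∈ {z : W | bruhatLE cs x z ∧ bruhatLE cs z y}, μ x z) =
        if x = y then 1 else 0) :
    ∀ x y : W, bruhatLE cs u x → bruhatLE cs x y → bruhatLE cs y v →
      μ x y = (-1 : ℤ) ^ (cs.length y - cs.length x) := by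
  simp only [CoxeterSystem.bruhatLE_iff_chainLE, ← CoxeterSystem.coe_chainIcc,
    finsum_mem_coe_finset] at hμ ⊢
  exact fun x y ↦ cs.eq_neg_one_pow_of_sum_chainIcc μ hμ

/-- every Bruhat interval `[u,v]` is Eulerian: the Möbius function of
the interval satisfies `μ(x,y) = (−1)^(l(y)−l(x))` for all `u ≤ x ≤ y ≤ v`.
Here the Möbius function is characterized by `∑_{x ≤ z ≤ y} μ(x,z) = δ_{x,y}`. -/
theorem bruhat_interval_eulerian {B W : Type*} [Group W] {M : CoxeterMatrix B}
    (cs : CoxeterSystem M W) (u v : W) (huv : bruhatLE cs u v)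
    (μ : W → W → ℤ)
    (hμ : ∀ x y : W, bruhatLE cs u x → bruhatLE cs x y → bruhatLE cs y v →
      (∑ᶠ z ∈ {z : W | bruhatLE cs x z ∧ bruhatLE cs z y}, μ x z) =
        if x = y then 1 else 0) :
    ∀ x y : W, bruhatLE cs u x → bruhatLE cs x y → bruhatLE cs y v →
      μ x y = (-1 : ℤ) ^ (cs.length y - cs.length x) :=
  bruhat_interval_eulerian_general cs u v μ hμ
end

section
/- Let (W,S) be a universal Coxeter system (all m(s,t) = ∞ for s ≠ t) with S = {s₁,…,s_{d+1}}, and let C_k denote the word s₁s₂⋯s_k with subscripts taken modulo d+1. Then every element of the open Bruhat interval (C_k, C_{d+k}) is lengthened on the right by s_{d+k+1}; that is, no v with C_k < v < C_{d+k} satisfies v·s_{d+k+1} < v. -/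
/-- The word `C_k = s₁s₂⋯s_k` with subscripts taken modulo `d+1`
(indices in `Fin (d+1)`, zero-based: the `j`-th letter, `1 ≤ j ≤ k`, is `s_j`,
i.e. the generator with index `(j-1) mod (d+1)`). -/
def cyclicWord (d k : ℕ) : List (Fin (d + 1)) :=
  (List.range k).map (fun j => ⟨j % (d + 1), Nat.mod_lt _ (Nat.succ_pos d)⟩)

/-!
If `v` had `s_{d+k+1}` as a right descent, its unique reduced word would end in that letter. As a
subword of `C_{d+k}`, this last letter sits at a position of `C_{d+k}` congruent to `d+k` modulo
`d+1`, hence at position at most `k-1`, so `ℓ(v) ≤ k = ℓ(C_k)`, contradicting `C_k < v`.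
Uniqueness of reduced words comes from the lift of the universal Coxeter group to the free product
of copies of `ℤ/2`, where words without two equal adjacent letters are normal forms.
-/

/-- `m(s, t) = ∞` is encoded as `M s t = 0`. -/
def CoxeterMatrix.IsUniversal {B : Type*} (M : CoxeterMatrix B) : Prop :=
  ∀ i j, i ≠ j → M i j = 0

namespace CoxeterSystem

variable {B W : Type*} [Group W] {M : CoxeterMatrix B} (cs : CoxeterSystem M W)

theorem IsReduced.isChain_ne : ∀ {ω : List B}, cs.IsReduced ω → ω.IsChain (· ≠ ·)
  | [], _ => .nil
  | [_], _ => .singleton _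
  | x :: y :: t, hω => by
    refine List.isChain_cons_cons.mpr ⟨?_, IsReduced.isChain_ne (ω := y :: t) (hω.drop 1)⟩
    rintro rfl
    have hxx : cs.IsReduced [x, x] := hω.take 2
    simp [IsReduced, wordProd] at hxx

theorem exists_isReduced_concat_of_isRightDescent {w : W} {i : B} (hi : cs.IsRightDescent w i) :
    ∃ ω : List B, cs.IsReduced (ω ++ [i]) ∧ cs.wordProd (ω ++ [i]) = w := by
  obtain ⟨ω, hω, hωw⟩ := cs.exists_isReduced (w * cs.simple i)
  have hprod : cs.wordProd (ω ++ [i]) = w := by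
    rw [wordProd_append, wordProd_singleton, ← hωw, simple_mul_simple_cancel_right]
  refine ⟨ω, ?_, hprod⟩
  have hlen := cs.isRightDescent_iff.mp hi
  rw [hωw, hω.eq] at hlen
  rw [IsReduced, hprod, List.length_append, List.length_singleton, hlen]

end CoxeterSystem

abbrev FreeProdZ2 (B : Type*) := Monoid.CoprodI fun _ : B => Multiplicative (ZMod 2)

namespace FreeProdZ2

open Monoid

variable {B : Type*}

def gen (i : B) : FreeProdZ2 B :=
  CoprodI.of (i := i) (Multiplicative.ofAdd 1)

def normalWord {ω : List B} (hω : ω.IsChain (· ≠ ·)) :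
    CoprodI.Word fun _ : B => Multiplicative (ZMod 2) where
  toList := ω.map fun i => ⟨i, Multiplicative.ofAdd 1⟩
  ne_one := by
    simp only [List.mem_map, forall_exists_index, and_imp]
    rintro _ i - rfl
    show Multiplicative.ofAdd (1 : ZMod 2) ≠ 1
    decide
  chain_ne := List.isChain_map _ |>.mpr hω

theorem normalWord_prod {ω : List B} (hω : ω.IsChain (· ≠ ·)) :
    (normalWord hω).prod = (ω.map gen).prod := by
  simp only [normalWord, CoprodI.Word.prod, List.map_map]
  rfl

theorem eq_of_prod_map_gen_eq {ω₁ ω₂ : List B} (h₁ : ω₁.IsChain (· ≠ ·))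
    (h₂ : ω₂.IsChain (· ≠ ·)) (h : (ω₁.map gen).prod = (ω₂.map gen).prod) : ω₁ = ω₂ := by
  classical
  have hword : normalWord h₁ = normalWord h₂ := CoprodI.Word.equiv.symm.injective <| by
    show (normalWord h₁).prod = (normalWord h₂).prod
    rw [normalWord_prod, normalWord_prod, h]
  simpa [normalWord, Function.comp_def] using congrArg (·.toList.map Sigma.fst) hword

end FreeProdZ2

namespace CoxeterMatrix.IsUniversal

open CoxeterSystem FreeProdZ2

variable {B W : Type*} [Group W] {M : CoxeterMatrix B}

theorem isLiftable_gen (hM : M.IsUniversal) : M.IsLiftable (gen (B := B)) := by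
  intro i j
  rcases eq_or_ne i j with rfl | hij
  · rw [M.diagonal i, pow_one, gen, ← map_mul]
    exact map_eq_one_iff _ (Monoid.CoprodI.of_injective i) |>.mpr (by decide)
  · rw [hM i j hij, pow_zero]

theorem lift_wordProd (hM : M.IsUniversal) (cs : CoxeterSystem M W) (ω : List B) :
    cs.lift ⟨gen, hM.isLiftable_gen⟩ (cs.wordProd ω) = (ω.map gen).prod := by
  rw [wordProd, map_list_prod, List.map_map]
  exact congrArg _ <| List.map_congr_left fun i _ => cs.lift_apply_simple _ i

theorem eq_of_wordProd_eq (hM : M.IsUniversal) (cs : CoxeterSystem M W) {ω₁ ω₂ : List B}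
    (h₁ : ω₁.IsChain (· ≠ ·)) (h₂ : ω₂.IsChain (· ≠ ·)) (h : cs.wordProd ω₁ = cs.wordProd ω₂) :
    ω₁ = ω₂ :=
  eq_of_prod_map_gen_eq h₁ h₂ <| by rw [← hM.lift_wordProd cs, ← hM.lift_wordProd cs, h]

theorem isReduced_of_isChain_ne (hM : M.IsUniversal) (cs : CoxeterSystem M W) {ω : List B}
    (hω : ω.IsChain (· ≠ ·)) : cs.IsReduced ω := by
  obtain ⟨ν, hν, hων⟩ := cs.exists_isReduced (cs.wordProd ω)
  rwa [hM.eq_of_wordProd_eq cs hω hν.isChain_ne hων]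

theorem sublist_of_bruhatLE (hM : M.IsUniversal) (cs : CoxeterSystem M W) {ω ν : List B}
    (hω : cs.IsReduced ω) (hν : cs.IsReduced ν)
    (h : bruhatLE cs (cs.wordProd ν) (cs.wordProd ω)) : ν.Sublist ω := by
  obtain ⟨ω', ν', hω', hω'ω, hν', hν'ν, hsub⟩ := h
  rwa [hM.eq_of_wordProd_eq cs hω'.isChain_ne hω.isChain_ne hω'ω,
    hM.eq_of_wordProd_eq cs hν'.isChain_ne hν.isChain_ne hν'ν] at hsub

end CoxeterMatrix.IsUniversal

theorem bruhatLT.length_lt {B W : Type*} [Group W] {M : CoxeterMatrix B}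
    {cs : CoxeterSystem M W} {u v : W} (h : bruhatLT cs u v) : cs.length u < cs.length v := by
  obtain ⟨⟨ω, ν, hω, rfl, hν, rfl, hsub⟩, hne⟩ := h
  rw [hω.eq, hν.eq]
  exact lt_of_le_of_ne hsub.length_le fun hlen => hne (congrArg _ (hsub.eq_of_length hlen))

theorem List.exists_le_getElem_eq_of_concat_sublist {α : Type*} {l L : List α} {a : α}
    (h : (l ++ [a]).Sublist L) : ∃ j, ∃ hj : j < L.length, l.length ≤ j ∧ L[j] = a := by
  obtain ⟨L₁, L₂, rfl, hl, ha⟩ := List.append_sublist_iff.mp h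
  obtain ⟨i, hi, rfl⟩ := List.mem_iff_getElem.mp (List.singleton_sublist.mp ha)
  refine ⟨L₁.length + i, by simp [hi], hl.length_le.trans (Nat.le_add_right _ _), ?_⟩
  rw [List.getElem_append_right (Nat.le_add_right _ _)]
  simp

@[simp] theorem length_cyclicWord (d n : ℕ) : (cyclicWord d n).length = n := by
  simp [cyclicWord]

theorem getElem_cyclicWord (d n j : ℕ) (hj : j < (cyclicWord d n).length) :
    (cyclicWord d n)[j] = ⟨j % (d + 1), Nat.mod_lt _ (Nat.succ_pos d)⟩ := by
  simp [cyclicWord]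

theorem isChain_ne_cyclicWord {d : ℕ} (hd : 0 < d) (n : ℕ) : (cyclicWord d n).IsChain (· ≠ ·) := by
  rw [cyclicWord, List.isChain_map]
  cases n with
  | zero => exact .nil
  | succ n =>
    refine (List.isChain_range_succ _ n).mpr fun m _ hm => ?_
    have hdvd : d + 1 ∣ m + 1 - m := (Nat.modEq_iff_dvd' (Nat.le_succ m)).mp (congrArg Fin.val hm)
    have := Nat.le_of_dvd (by omega) hdvd
    omega

theorem length_le_of_concat_sublist_cyclicWord {d n : ℕ} {l : List (Fin (d + 1))}
    (h : (l ++ [(⟨n % (d + 1), Nat.mod_lt _ (Nat.succ_pos d)⟩ : Fin (d + 1))]).Sublist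
      (cyclicWord d n)) :
    l.length + 1 + d ≤ n := by
  obtain ⟨j, hj, hlj, hjn⟩ := List.exists_le_getElem_eq_of_concat_sublist h
  rw [getElem_cyclicWord, Fin.mk.injEq] at hjn
  rw [length_cyclicWord] at hj
  have hdvd : d + 1 ∣ n - j := (Nat.modEq_iff_dvd' hj.le).mp hjn
  have := Nat.le_of_dvd (by omega) hdvd
  omega

/-- in a universal Coxeter system with generators `s₁,…,s_{d+1}`,
every element `v` of the open Bruhat interval `(C_k, C_{d+k})` is lengthened on
the right by `s_{d+k+1}`. -/
theorem universal_cyclic_word_lengthened {W : Type*} [Group W]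
    {M : CoxeterMatrix (Fin (d + 1))} (cs : CoxeterSystem M W)
    (huniv : ∀ i j : Fin (d + 1), i ≠ j → M i j = 0)
    (k : ℕ) :
    ∀ v : W, bruhatLT cs (cs.wordProd (cyclicWord d k)) v →
      bruhatLT cs v (cs.wordProd (cyclicWord d (d + k))) →
      cs.length v <
        cs.length (v * cs.simple ⟨(d + k) % (d + 1), Nat.mod_lt _ (Nat.succ_pos d)⟩) := by
  intro v hCv hvC
  rcases Nat.eq_zero_or_pos d with rfl | hd
  · have hlen := hCv.length_lt.trans hvC.length_lt
    simp at hlen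
  have hM : M.IsUniversal := huniv
  have hC (n : ℕ) : cs.IsReduced (cyclicWord d n) :=
    hM.isReduced_of_isChain_ne cs (isChain_ne_cyclicWord hd n)
  refine lt_of_le_of_ne (not_lt.mp fun hdesc => ?_) (cs.length_mul_simple_ne v _).symm
  obtain ⟨ω, hω, rfl⟩ := cs.exists_isReduced_concat_of_isRightDescent hdesc
  have hle := length_le_of_concat_sublist_cyclicWord (hM.sublist_of_bruhatLE cs (hC _) hω hvC.1)
  have hgt := hCv.length_lt
  rw [(hC k).eq, hω.eq, length_cyclicWord, List.length_append, List.length_singleton] at hgt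
  omega
end
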